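/- arXiv:1801.05137 — 7 statements merged into one kernel-verified Lean document; each statement's English description precedes it below -/
import Mathlib

section
/- For a connected graph G with δ(G) ≥ 1, χ_d^t(G) = 2 if and only if G is a complete bipartite graph. -/
open SimpleGraph

/-- The central graph `C(G)`: subdivide each edge of `G` once (vertex `c_e` for each
edge `e`) and join all non-adjacent pairs of original vertices. -/
def centralGraph {V : Type*} (G : SimpleGraph V) : SimpleGraph (V ⊕ G.edgeSet) where
  Adj x y :=
    match x, y with
    | Sum.inl u, Sum.inl v => u ≠ v ∧ ¬ G.Adj u v
    | Sum.inl u, Sum.inr e => u ∈ (e : Sym2 V)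
    | Sum.inr e, Sum.inl u => u ∈ (e : Sym2 V)
    | Sum.inr _, Sum.inr _ => False
  symm := by
    constructor
    rintro (u | e) (v | f) h
    · exact ⟨h.1.symm, fun a => h.2 a.symm⟩
    · exact h
    · exact h
    · exact h
  loopless := by
    constructor
    rintro (u | e) h
    · exact h.1 rfl
    · exact h

/-- `f` is a total dominator coloring of `G`: a proper coloring such that every
vertex is adjacent to all vertices of some (nonempty) color class. -/
def IsTDColoring {V : Type*} (G : SimpleGraph V) (f : V → ℕ) : Prop :=
  (∀ u v, G.Adj u v → f u ≠ f v) ∧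
  ∀ v, ∃ c, (∃ w, f w = c) ∧ ∀ w, f w = c → G.Adj v w

/-- Total dominator chromatic number: minimum number of colors in a TDC. -/
noncomputable def tdcn {V : Type*} (G : SimpleGraph V) : ℕ :=
  sInf {k | ∃ f : V → ℕ, IsTDColoring G f ∧ ∀ v, f v < k}

/-- Total domination number. -/
noncomputable def tdn {V : Type*} (G : SimpleGraph V) : ℕ :=
  sInf {k | ∃ S : Set V, S.ncard = k ∧ ∀ v, ∃ u ∈ S, G.Adj v u}

/-- The join of two graphs. -/
def joinGraph {α β : Type*} (G : SimpleGraph α) (H : SimpleGraph β) :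
    SimpleGraph (α ⊕ β) where
  Adj x y :=
    match x, y with
    | Sum.inl u, Sum.inl v => G.Adj u v
    | Sum.inr u, Sum.inr v => H.Adj u v
    | Sum.inl _, Sum.inr _ => True
    | Sum.inr _, Sum.inl _ => True
  symm := by constructor; rintro (u | u) (v | v) h <;> first | exact h.symm | trivial
  loopless := by constructor; rintro (u | u) h <;> exact h.ne rfl

/-- The path graph on `n` vertices. -/
def pathG (n : ℕ) : SimpleGraph (Fin n) :=
  SimpleGraph.fromRel (fun i j => (i : ℕ) + 1 = (j : ℕ))

/-- The cycle graph on `n` vertices. -/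
def cycleG (n : ℕ) : SimpleGraph (ZMod n) :=
  SimpleGraph.fromRel (fun i j => i - j = 1)

/-- The double star `S_{1,n,n}`: center `0`, support vertices `1,...,n`
(adjacent to the center), each `i` with its own pendant `n+i`. -/
def doubleStar (n : ℕ) : SimpleGraph (Fin (2 * n + 1)) :=
  SimpleGraph.fromRel (fun a b =>
    ((a : ℕ) = 0 ∧ 1 ≤ (b : ℕ) ∧ (b : ℕ) ≤ n) ∨
    (1 ≤ (a : ℕ) ∧ (a : ℕ) ≤ n ∧ (b : ℕ) = (a : ℕ) + n))

/-- The disjoint union of a family of graphs. -/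
def sigmaGraph {ι : Type*} {V : ι → Type*} (G : ∀ i, SimpleGraph (V i)) :
    SimpleGraph (Σ i, V i) :=
  SimpleGraph.fromRel (fun x y =>
    ∃ (i : ι) (u v : V i), (G i).Adj u v ∧ x = ⟨i, u⟩ ∧ y = ⟨i, v⟩)

/-!
A vertex is never adjacent to itself, so the class it dominates is not its own: a total
dominator coloring of a nonempty graph uses at least two colors. With exactly two colors,
every vertex is adjacent to the whole other class, which makes `G` complete bipartite;
conversely, the two sides of a complete bipartite graph are a total dominator coloring.
-/

def IsCompleteBipartition {V : Type*} (G : SimpleGraph V) (s : Set V) : Prop :=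
  s.Nonempty ∧ sᶜ.Nonempty ∧ ∀ u v, G.Adj u v ↔ (u ∈ s ↔ v ∉ s)

namespace IsTDColoring

variable {V : Type*} {G : SimpleGraph V} {f : V → ℕ}

theorem exists_adj (hf : IsTDColoring G f) (v : V) : ∃ w, G.Adj v w := by
  obtain ⟨c, ⟨w, hw⟩, hdom⟩ := hf.2 v
  exact ⟨w, hdom w hw⟩

theorem two_le [Nonempty V] (hf : IsTDColoring G f) {k : ℕ} (hk : ∀ v, f v < k) : 2 ≤ k := by
  inhabit V
  obtain ⟨w, hw⟩ := hf.exists_adj default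
  have := hf.1 _ _ hw
  have := hk default
  have := hk w
  omega

/-- With only two colors, the class dominated by `v` must be the other one. -/
theorem adj_iff_ne_of_lt_two (hf : IsTDColoring G f) (h2 : ∀ v, f v < 2) (u v : V) :
    G.Adj u v ↔ f u ≠ f v := by
  refine ⟨hf.1 u v, fun hne => ?_⟩
  obtain ⟨c, ⟨w, hw⟩, hdom⟩ := hf.2 v
  have hcv : c ≠ f v := hw ▸ (hf.1 v w (hdom w hw)).symm
  have := h2 u
  have := h2 v
  have := h2 w
  exact (hdom u (by omega)).symm

theorem isCompleteBipartition_of_lt_two [Nonempty V] (hf : IsTDColoring G f)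
    (h2 : ∀ v, f v < 2) : IsCompleteBipartition G {v | f v = 0} := by
  inhabit V
  obtain ⟨w, hw⟩ := hf.exists_adj default
  have := hf.1 _ _ hw
  have := h2 default
  have := h2 w
  obtain ⟨x, y, hx, hy⟩ : ∃ x y, f x = 0 ∧ f y ≠ 0 := by
    by_cases h0 : f default = 0
    exacts [⟨default, w, h0, by omega⟩, ⟨w, default, by omega, h0⟩]
  refine ⟨⟨x, hx⟩, ⟨y, hy⟩, fun u v => ?_⟩
  have := h2 u
  have := h2 v
  simp only [hf.adj_iff_ne_of_lt_two h2, Set.mem_ofPred_eq]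
  omega

end IsTDColoring

theorem isTDColoring_of_adj_iff_ne {V : Type*} {G : SimpleGraph V} {f : V → ℕ}
    (hadj : ∀ u v, G.Adj u v ↔ f u ≠ f v) (hne : ∀ v, ∃ w, f w ≠ f v) : IsTDColoring G f := by
  refine ⟨fun u v => (hadj u v).1, fun v => ?_⟩
  obtain ⟨w, hw⟩ := hne v
  exact ⟨f w, ⟨w, rfl⟩, fun x hx => (hadj v x).2 (hx ▸ hw.symm)⟩

theorem IsCompleteBipartition.isTDColoring {V : Type*} {G : SimpleGraph V} {s : Set V}
    [DecidablePred (· ∈ s)] (hs : IsCompleteBipartition G s) :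
    IsTDColoring G (fun v => if v ∈ s then 0 else 1) := by
  obtain ⟨⟨a, ha⟩, ⟨b, hb : b ∉ s⟩, hG⟩ := hs
  refine isTDColoring_of_adj_iff_ne (fun u v => ?_) fun v => ?_
  · rw [hG]
    split_ifs <;> simp_all
  · by_cases hv : v ∈ s
    exacts [⟨b, by simp [hv, hb]⟩, ⟨a, by simp [hv, ha]⟩]

theorem tdcn_of_isEmpty {V : Type*} [IsEmpty V] (G : SimpleGraph V) : tdcn G = 0 :=
  Nat.sInf_eq_zero.2 <| .inl ⟨fun _ => 0, ⟨fun u => isEmptyElim u, fun v => isEmptyElim v⟩,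
    fun v => isEmptyElim v⟩

theorem tdcn_eq_two_iff_exists_isTDColoring {V : Type*} [Nonempty V] (G : SimpleGraph V) :
    tdcn G = 2 ↔ ∃ f : V → ℕ, IsTDColoring G f ∧ ∀ v, f v < 2 := by
  constructor
  · intro h
    have hS := Nat.nonempty_of_pos_sInf (show 0 < tdcn G by omega)
    have hmem : tdcn G ∈ _ := Nat.sInf_mem hS
    rwa [h] at hmem
  · rintro ⟨f, hf, h2⟩
    exact le_antisymm (Nat.sInf_le ⟨f, hf, h2⟩)
      (le_csInf ⟨2, f, hf, h2⟩ fun k ⟨_, hg, hk⟩ => hg.two_le hk)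

theorem tdcn_eq_two_iff_general {V : Type*} (G : SimpleGraph V) :
    tdcn G = 2 ↔
      ∃ s : Set V, s.Nonempty ∧ sᶜ.Nonempty ∧
        ∀ u v, G.Adj u v ↔ (u ∈ s ↔ v ∉ s) := by
  classical
  change _ ↔ ∃ s, IsCompleteBipartition G s
  rcases isEmpty_or_nonempty V with hV | hV
  · exact iff_of_false (by simp [tdcn_of_isEmpty]) fun ⟨_, ⟨v, _⟩, _⟩ => isEmptyElim v
  rw [tdcn_eq_two_iff_exists_isTDColoring]
  constructor
  · rintro ⟨f, hf, h2⟩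
    exact ⟨_, hf.isCompleteBipartition_of_lt_two h2⟩
  · rintro ⟨s, hs⟩
    exact ⟨_, hs.isTDColoring, fun v => by split_ifs <;> omega⟩

theorem tdcn_eq_two_iff {V : Type*} [Fintype V] (G : SimpleGraph V)
    (hconn : G.Connected) (hδ : ∀ v, ∃ u, G.Adj v u) :
    tdcn G = 2 ↔
      ∃ s : Set V, s.Nonempty ∧ sᶜ.Nonempty ∧
        ∀ u v, G.Adj u v ↔ (u ∈ s ↔ v ∉ s) :=
  tdcn_eq_two_iff_general G
end

section
/- For a connected graph G of order n with δ(G) ≥ 1, χ_d^t(G) = n if and only if G is the complete graph K_n. -/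
open SimpleGraph

lemma aux_walk {V : Type*} {G : SimpleGraph V} {S : Set V}
    (hS : ∀ x ∈ S, ∀ y, G.Adj x y → y ∈ S) :
    ∀ {a c : V}, G.Walk a c → a ∈ S → c ∈ S := by
  intro a c p
  induction p with
  | nil => exact id
  | cons h p ih => intro ha; exact ih (hS _ ha _ h)

lemma pend_pend {V : Type*} {G : SimpleGraph V} {p s : V}
    (hconn : G.Connected)
    (h1 : G.Adj p s) (h2 : ∀ y, G.Adj p y → y = s)
    (h3 : ∀ y, G.Adj s y → y = p) : ∀ x : V, x = p ∨ x = s := by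
  intro x
  have hcl : ∀ a ∈ ({p, s} : Set V), ∀ y, G.Adj a y → y ∈ ({p, s} : Set V) := by
    rintro a (rfl | rfl) y hy
    · exact Or.inr (h2 y hy)
    · exact Or.inl (h3 y hy)
  obtain ⟨w⟩ := hconn.preconnected s x
  have := aux_walk hcl w (by simp)
  simpa [or_comm] using this

lemma bad_pendant {V : Type*} {G : SimpleGraph V}
    (hδ : ∀ v, ∃ u, G.Adj v u) {u v : V}
    (h : ¬ ∀ x, (G.Adj x u ∧ G.Adj x v) ∨ ∃ y, G.Adj x y ∧ y ≠ u ∧ y ≠ v) :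
    ∃ x, (G.Adj x u ∧ ∀ y, G.Adj x y → y = u) ∨
         (G.Adj x v ∧ ∀ y, G.Adj x y → y = v) := by
  push_neg at h
  obtain ⟨x, hA, hB⟩ := h
  refine ⟨x, ?_⟩
  by_cases hxu : G.Adj x u
  · have hxv : ¬ G.Adj x v := hA hxu
    refine Or.inl ⟨hxu, fun y hy => ?_⟩
    by_cases hy' : y = u
    · exact hy'
    · exact absurd (hB y hy hy' ▸ hy) hxv
  · obtain ⟨y0, hy0⟩ := hδ x
    have hy0u : y0 ≠ u := fun h' => hxu (h' ▸ hy0)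
    have hy0v : y0 = v := hB y0 hy0 hy0u
    refine Or.inr ⟨hy0v ▸ hy0, fun y hy => ?_⟩
    by_cases hy' : y = u
    · exact absurd (hy' ▸ hy) hxu
    · exact hB y hy hy'

lemma good_of_pend {V : Type*} {G : SimpleGraph V}
    (hconn : G.Connected) (hδ : ∀ v, ∃ u, G.Adj v u) {u0 v0 w : V}
    (hne : u0 ≠ v0) (hna : ¬ G.Adj u0 v0)
    (hw : G.Adj w u0) (hw2 : ∀ y, G.Adj w y → y = u0) :
    ∃ u v, u ≠ v ∧ ¬ G.Adj u v ∧
      ∀ x, (G.Adj x u ∧ G.Adj x v) ∨ ∃ y, G.Adj x y ∧ y ≠ u ∧ y ≠ v := by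
  have hwv : w ≠ v0 := fun h => hna ((h ▸ hw : G.Adj v0 u0).symm)
  have hwnav : ¬ G.Adj w v0 := fun h => hne (hw2 v0 h).symm
  by_cases h1 : ∀ x, (G.Adj x w ∧ G.Adj x v0) ∨ ∃ y, G.Adj x y ∧ y ≠ w ∧ y ≠ v0
  · exact ⟨w, v0, hwv, hwnav, h1⟩
  obtain ⟨x, hx⟩ := bad_pendant hδ h1
  rcases hx with ⟨hx1, hx2⟩ | ⟨hx1, hx2⟩
  · -- x is a pendant at w, so x = u0, and {w, u0} is a closed K2: contradiction
    have hxu : x = u0 := hw2 x hx1.symm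
    subst hxu
    rcases pend_pend hconn hw hw2 hx2 v0 with h | h
    · exact absurd h.symm hwv
    · exact absurd h.symm hne
  · -- x is a pendant at v0; the pair (w, x) is good
    have hxw : x ≠ w := fun h => hwnav (h ▸ hx1)
    have hnawx : ¬ G.Adj w x := fun h => hna ((hw2 x h) ▸ hx1)
    refine ⟨w, x, hxw.symm, hnawx, ?_⟩
    by_contra h2
    obtain ⟨z, hz⟩ := bad_pendant hδ h2
    rcases hz with ⟨hz1, hz2⟩ | ⟨hz1, hz2⟩
    · have hzu : z = u0 := hw2 z hz1.symm
      subst hzu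
      rcases pend_pend hconn hw hw2 hz2 v0 with h | h
      · exact absurd h.symm hwv
      · exact absurd h.symm hne
    · have hzv : z = v0 := hx2 z hz1.symm
      subst hzv
      rcases pend_pend hconn hx1 hx2 hz2 u0 with h | h
      · exact hna (h ▸ hx1)
      · exact hne h

lemma good_pair {V : Type*} {G : SimpleGraph V}
    (hconn : G.Connected) (hδ : ∀ v, ∃ u, G.Adj v u) {u0 v0 : V}
    (hne : u0 ≠ v0) (hna : ¬ G.Adj u0 v0) :
    ∃ u v, u ≠ v ∧ ¬ G.Adj u v ∧
      ∀ x, (G.Adj x u ∧ G.Adj x v) ∨ ∃ y, G.Adj x y ∧ y ≠ u ∧ y ≠ v := by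
  by_cases h0 : ∀ x, (G.Adj x u0 ∧ G.Adj x v0) ∨ ∃ y, G.Adj x y ∧ y ≠ u0 ∧ y ≠ v0
  · exact ⟨u0, v0, hne, hna, h0⟩
  obtain ⟨x, hx⟩ := bad_pendant hδ h0
  rcases hx with ⟨hx1, hx2⟩ | ⟨hx1, hx2⟩
  · exact good_of_pend hconn hδ hne hna hx1 hx2
  · exact good_of_pend hconn hδ hne.symm (fun h => hna h.symm) hx1 hx2

theorem tdcn_eq_card_iff {V : Type*} [Fintype V] (G : SimpleGraph V) (n : ℕ)
    (hn : Fintype.card V = n) (hconn : G.Connected)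
    (hδ : ∀ v, ∃ u, G.Adj v u) :
    tdcn G = n ↔ G = ⊤ := by
  subst hn
  constructor
  · -- tdcn = n → G = ⊤
    intro h
    classical
    by_contra hneT
    have hpair : ∃ u v : V, u ≠ v ∧ ¬ G.Adj u v := by
      by_contra hp
      push_neg at hp
      apply hneT
      ext x y
      simp only [SimpleGraph.top_adj]
      exact ⟨fun hxy => hxy.ne, fun hxy => hp x y hxy⟩
    obtain ⟨u0, v0, hne0, hna0⟩ := hpair
    obtain ⟨u, v, huv, hna, hgood⟩ := good_pair hconn hδ hne0 hna0
    have hpos : 0 < Fintype.card V := Fintype.card_pos_iff.mpr ⟨u⟩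
    set N := Fintype.card V with hN
    let e : V ≃ Fin N := Fintype.equivFin V
    let t : Fin N := ⟨N - 1, by omega⟩
    let e' : V ≃ Fin N := e.trans (Equiv.swap (e v) t)
    have he'v : e' v = t := by simp [e', Equiv.swap_apply_left]
    have hinj : Function.Injective e' := e'.injective
    have hlt : ∀ x : V, x ≠ v → (e' x : ℕ) < N - 1 := by
      intro x hx
      have h1 : e' x ≠ t := fun hh => hx (hinj (hh.trans he'v.symm))
      have h2 : (e' x : ℕ) ≠ N - 1 := fun hh => h1 (Fin.ext hh)
      have h3 : (e' x : ℕ) < N := (e' x).isLt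
      omega
    have hvalinj : ∀ x y : V, (e' x : ℕ) = (e' y : ℕ) → x = y :=
      fun x y hh => hinj (Fin.ext hh)
    let f : V → ℕ := fun x => if x = v then (e' u : ℕ) else (e' x : ℕ)
    have hfmem : (N - 1) ∈ {k | ∃ f : V → ℕ, IsTDColoring G f ∧ ∀ x, f x < k} := by
      refine ⟨f, ⟨?_, ?_⟩, ?_⟩
      · -- proper
        intro a b hab hfab
        by_cases ha : a = v <;> by_cases hb : b = v
        · subst ha; subst hb; exact G.loopless.irrefl _ hab
        · subst ha
          simp only [f, if_pos rfl, if_neg hb] at hfab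
          have : u = b := hvalinj _ _ hfab
          subst this
          exact hna hab.symm
        · subst hb
          simp only [f, if_neg ha, if_pos rfl] at hfab
          have : a = u := hvalinj _ _ hfab
          subst this
          exact hna hab
        · simp only [f, if_neg ha, if_neg hb] at hfab
          exact G.loopless.irrefl _ ((hvalinj _ _ hfab) ▸ hab)
      · -- total domination
        intro x
        rcases hgood x with ⟨hxu, hxv⟩ | ⟨y, hxy, hyu, hyv⟩
        · refine ⟨(e' u : ℕ), ⟨u, by simp [f, if_neg huv]⟩, fun w hw => ?_⟩
          by_cases hwv : w = v
          · exact hwv ▸ hxv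
          · simp only [f, if_neg hwv] at hw
            exact (hvalinj _ _ hw) ▸ hxu
        · refine ⟨(e' y : ℕ), ⟨y, by simp [f, if_neg hyv]⟩, fun w hw => ?_⟩
          by_cases hwv : w = v
          · subst hwv
            simp only [f, if_pos rfl] at hw
            exact absurd (hvalinj _ _ hw).symm hyu
          · simp only [f, if_neg hwv] at hw
            exact (hvalinj _ _ hw) ▸ hxy
      · -- bounds
        intro x
        by_cases hx : x = v
        · simp only [f, if_pos hx]; exact hlt u huv
        · simp only [f, if_neg hx]; exact hlt x hx
    have : tdcn G ≤ N - 1 := Nat.sInf_le hfmem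
    omega
  · -- G = ⊤ → tdcn = n
    intro h
    subst h
    set N := Fintype.card V with hN
    let e : V ≃ Fin N := Fintype.equivFin V
    let f : V → ℕ := fun x => (e x : ℕ)
    have hmem : N ∈ {k | ∃ f : V → ℕ,
        IsTDColoring (⊤ : SimpleGraph V) f ∧ ∀ x, f x < k} := by
      refine ⟨f, ⟨?_, ?_⟩, fun x => (e x).isLt⟩
      · intro a b hab hfab
        exact hab.ne (e.injective (Fin.ext hfab))
      · intro x
        obtain ⟨u, hu⟩ := hδ x
        refine ⟨f u, ⟨u, rfl⟩, fun w hw => ?_⟩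
        have : w = u := e.injective (Fin.ext hw)
        subst this
        exact hu
    refine le_antisymm (Nat.sInf_le hmem) (le_csInf ⟨N, hmem⟩ ?_)
    rintro k ⟨g, ⟨hprop, _⟩, hbd⟩
    have hginj : Function.Injective g := by
      intro a b hab
      by_contra hne
      exact hprop a b ((SimpleGraph.top_adj ..).mpr hne) hab
    have : Function.Injective (fun x : V => (⟨g x, hbd x⟩ : Fin k)) := by
      intro a b hab
      exact hginj (congrArg Fin.val hab)
    simpa using Fintype.card_le_of_injective _ this
end

section
/- For any graph G of order n ≥ 2 that has a Hamiltonian path, ⌊2n/3⌋ + 1 ≤ χ_d^t(C(G)) ≤ n + ⌈n/2⌉. -/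
open SimpleGraph

/-!
Number the vertices `v₀, …, v_{n-1}` along the Hamiltonian path.

Upper bound: colour `vᵢ` by `i - 1` (so `v₀` and `v₁`, adjacent in `G`, share colour `0`), give
each edge of an edge cover of the path by `⌈n/2⌉` path edges its own colour, and all other
subdivision vertices one common colour. A vertex is dominated by the singleton class of the
covering edge through it, a subdivision vertex by the class of its later endpoint.

Lower bound: the class dominating a subdivision vertex consists of one or two endpoints of its
edge, and it dominates at most `3 - |class|` of the `n - 1` path edges. If `T` is the set of these
colours and `W` the set of vertices coloured from `T`, then `(n - 1) + |W| ≤ 3|T|`. Two vertices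
outside `W` cannot share a colour: they would be adjacent in `C(G)`, or span an edge of `G` whose
dominating class meets them. Counting the colours in `T`, those of the vertices outside `W`, and
that of a subdivision vertex (never in `T`) gives `χ_d^t ≥ |T| + max(n - |W|, 1)`, hence
`3 χ_d^t ≥ 2n + 1`.
-/

open Finset Function

namespace SimpleGraph

variable {V : Type*} {G : SimpleGraph V}

theorem Walk.IsPath.exists_finEquiv_adj {u w : V} {p : G.Walk u w} (hp : p.IsPath)
    (hsupp : ∀ x, x ∈ p.support) :
    ∃ v : Fin (p.length + 1) ≃ V, ∀ j : Fin p.length, G.Adj (v j.castSucc) (v j.succ) := by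
  have hbij : Bijective fun i : Fin (p.length + 1) => p.getVert i := by
    refine ⟨fun i j hij => Fin.ext (hp.getVert_injOn (Nat.lt_succ_iff.1 i.isLt)
      (Nat.lt_succ_iff.1 j.isLt) hij), fun x => ?_⟩
    obtain ⟨i, rfl, hi⟩ := Walk.mem_support_iff_exists_getVert.1 (hsupp x)
    exact ⟨⟨i, Nat.lt_succ_of_le hi⟩, rfl⟩
  exact ⟨Equiv.ofBijective _ hbij, fun j => p.adj_getVert_succ j.isLt⟩

end SimpleGraph

section CentralGraph

variable {V : Type*} {G : SimpleGraph V}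

@[simp] lemma centralGraph_adj_inl_inl {u w : V} :
    (centralGraph G).Adj (.inl u) (.inl w) ↔ u ≠ w ∧ ¬G.Adj u w := Iff.rfl

@[simp] lemma centralGraph_adj_inl_inr {u : V} {e : G.edgeSet} :
    (centralGraph G).Adj (.inl u) (.inr e) ↔ u ∈ (e : Sym2 V) := Iff.rfl

@[simp] lemma centralGraph_adj_inr_inl {u : V} {e : G.edgeSet} :
    (centralGraph G).Adj (.inr e) (.inl u) ↔ u ∈ (e : Sym2 V) := Iff.rfl

@[simp] lemma centralGraph_not_adj_inr_inr {e e' : G.edgeSet} :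
    ¬(centralGraph G).Adj (.inr e) (.inr e') := id

lemma IsTDColoring.exists_class_subset_edge {f : V ⊕ G.edgeSet → ℕ}
    (hf : IsTDColoring (centralGraph G) f) (e : G.edgeSet) :
    ∃ c, (∃ x, f (.inl x) = c) ∧ ∀ y, f y = c → ∃ x ∈ (e : Sym2 V), y = .inl x := by
  obtain ⟨c, ⟨y₀, hy₀⟩, hdom⟩ := hf.2 (.inr e)
  have hclass : ∀ y, f y = c → ∃ x ∈ (e : Sym2 V), y = .inl x := by
    rintro (x | e') hy
    · exact ⟨x, centralGraph_adj_inr_inl.1 (hdom _ hy), rfl⟩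
    · exact absurd (hdom _ hy) centralGraph_not_adj_inr_inr
  obtain ⟨x₀, -, rfl⟩ := hclass y₀ hy₀
  exact ⟨c, ⟨x₀, hy₀⟩, hclass⟩

end CentralGraph

lemma tdcn_le {V : Type*} {G : SimpleGraph V} {f : V → ℕ} {k : ℕ} (hf : IsTDColoring G f)
    (hk : ∀ x, f x < k) : tdcn G ≤ k :=
  Nat.sInf_le ⟨f, hf, hk⟩

lemma exists_isTDColoring_lt_tdcn {V : Type*} {G : SimpleGraph V} {f : V → ℕ} {k : ℕ}
    (hf : IsTDColoring G f) (hk : ∀ x, f x < k) :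
    ∃ g : V → ℕ, IsTDColoring G g ∧ ∀ x, g x < tdcn G :=
  Nat.sInf_mem (s := {k | ∃ g : V → ℕ, IsTDColoring G g ∧ ∀ x, g x < k}) ⟨k, f, hf, hk⟩

/-- The designated path edges `{i, i + 1}` (`i` even, or `i + 1 = m`) cover all positions
`0, …, m`; they get pairwise distinct colours above `m`, all other edges share colour `m`. -/
def subdivColor (m : ℕ) (z : Sym2 ℕ) : ℕ :=
  if z.sup = z.inf + 1 ∧ (z.inf % 2 = 0 ∨ z.sup = m) then m + 1 + z.sup / 2 else m

lemma le_subdivColor (m : ℕ) (z : Sym2 ℕ) : m ≤ subdivColor m z := by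
  unfold subdivColor; split_ifs <;> omega

lemma subdivColor_lt {m : ℕ} {z : Sym2 ℕ} (hz : ∀ i ∈ z, i ≤ m) :
    subdivColor m z < m + 1 + (m + 2) / 2 := by
  induction z using Sym2.ind with
  | _ i j =>
    have := hz i (Sym2.mem_mk_left i j)
    have := hz j (Sym2.mem_mk_right i j)
    unfold subdivColor
    split_ifs <;> simp only [Sym2.sup_mk, Sym2.inf_mk] at * <;> omega

lemma subdivColor_eq_iff {m d : ℕ} (hd : d < m) (hdes : d % 2 = 0 ∨ d + 1 = m) {z : Sym2 ℕ}
    (hz : ∀ i ∈ z, i ≤ m) : subdivColor m z = m + 1 + (d + 1) / 2 ↔ z = s(d, d + 1) := by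
  induction z using Sym2.ind with
  | _ i j =>
    have := hz i (Sym2.mem_mk_left i j)
    have := hz j (Sym2.mem_mk_right i j)
    unfold subdivColor
    rw [Sym2.eq_iff]
    split_ifs <;> simp only [Sym2.sup_mk, Sym2.inf_mk] at * <;> omega

section HamiltonianPath

variable {V : Type*} {G : SimpleGraph V} {m : ℕ} (v : Fin (m + 1) ≃ V)

lemma val_symm_injective : Injective fun w => (v.symm w : ℕ) :=
  Fin.val_injective.comp v.symm.injective

lemma adj_of_val_symm_add_one_eq (hv : ∀ j : Fin m, G.Adj (v j.castSucc) (v j.succ)) {a b : V}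
    (h : (v.symm a : ℕ) + 1 = v.symm b) : G.Adj a b := by
  have hb := (v.symm b).isLt
  have hj := hv ⟨v.symm a, by omega⟩
  convert hj using 1 <;> apply v.symm.injective <;> ext <;> simp [h]

lemma mem_of_val_symm_mem_map {e : Sym2 V} {w : V}
    (h : (v.symm w : ℕ) ∈ e.map (Fin.val ∘ v.symm)) : w ∈ e := by
  obtain ⟨a, ha, haw⟩ := Sym2.mem_map.1 h
  rwa [← val_symm_injective v haw]

lemma le_of_mem_map_val_symm (e : Sym2 V) : ∀ i ∈ e.map (Fin.val ∘ v.symm), i ≤ m := by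
  intro i hi
  obtain ⟨a, -, rfl⟩ := Sym2.mem_map.1 hi
  exact Nat.lt_succ_iff.1 (v.symm a).isLt

variable (G) in
def pathTDColoring : V ⊕ G.edgeSet → ℕ
  | .inl w => v.symm w - 1
  | .inr e => subdivColor m ((e : Sym2 V).map (Fin.val ∘ v.symm))

lemma pathTDColoring_inl_lt_inr (hm : 1 ≤ m) (w : V) (e : G.edgeSet) :
    pathTDColoring G v (.inl w) < pathTDColoring G v (.inr e) := by
  have := (v.symm w).isLt
  have := le_subdivColor m ((e : Sym2 V).map (Fin.val ∘ v.symm))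
  simp only [pathTDColoring]
  omega

lemma pathTDColoring_lt (x : V ⊕ G.edgeSet) : pathTDColoring G v x < m + 1 + (m + 2) / 2 := by
  rcases x with w | e
  · have := (v.symm w).isLt
    simp only [pathTDColoring]
    omega
  · exact subdivColor_lt (le_of_mem_map_val_symm v e)

lemma pathTDColoring_proper (hm : 1 ≤ m) (hv : ∀ j : Fin m, G.Adj (v j.castSucc) (v j.succ))
    (x y : V ⊕ G.edgeSet) (hxy : (centralGraph G).Adj x y) :
    pathTDColoring G v x ≠ pathTDColoring G v y := by
  rcases x with a | e <;> rcases y with b | e'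
  · obtain ⟨hab, hnadj⟩ := centralGraph_adj_inl_inl.1 hxy
    have hpos : (v.symm a : ℕ) ≠ v.symm b := fun h => hab (val_symm_injective v h)
    intro hc
    simp only [pathTDColoring] at hc
    rcases Nat.lt_or_gt_of_ne hpos with h | h
    · exact hnadj (adj_of_val_symm_add_one_eq v hv (by omega))
    · exact hnadj (adj_of_val_symm_add_one_eq v hv (by omega)).symm
  · exact (pathTDColoring_inl_lt_inr v hm a e').ne
  · exact (pathTDColoring_inl_lt_inr v hm b e).ne'
  · exact absurd hxy centralGraph_not_adj_inr_inr

lemma pathTDColoring_dominates_inl (hm : 1 ≤ m)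
    (hv : ∀ j : Fin m, G.Adj (v j.castSucc) (v j.succ)) (w : V) : ∃ c, (∃ y, pathTDColoring G v y = c) ∧
      ∀ y, pathTDColoring G v y = c → (centralGraph G).Adj (.inl w) y := by
  have hw := (v.symm w).isLt
  obtain ⟨d, hd, hdes, hwd⟩ : ∃ d < m, (d % 2 = 0 ∨ d + 1 = m) ∧
      ((v.symm w : ℕ) = d ∨ (v.symm w : ℕ) = d + 1) := by
    refine ⟨if (v.symm w : ℕ) = m then m - 1 else 2 * ((v.symm w : ℕ) / 2), ?_⟩
    split_ifs <;> omega
  let ed : G.edgeSet := ⟨s(v ⟨d, by omega⟩, v ⟨d + 1, by omega⟩),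
    adj_of_val_symm_add_one_eq v hv (by simp)⟩
  have hcolor (e : G.edgeSet) : pathTDColoring G v (.inr e) = m + 1 + (d + 1) / 2 ↔
      (e : Sym2 V).map (Fin.val ∘ v.symm) = s(d, d + 1) :=
    subdivColor_eq_iff hd hdes (le_of_mem_map_val_symm v e)
  refine ⟨m + 1 + (d + 1) / 2, ⟨.inr ed, (hcolor ed).2 (by simp [ed])⟩, ?_⟩
  rintro (y | e) hy
  · have := pathTDColoring_inl_lt_inr v hm y ed
    rw [hy, (hcolor ed).2 (by simp [ed])] at this
    exact absurd this (lt_irrefl _)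
  · refine centralGraph_adj_inl_inr.2 (mem_of_val_symm_mem_map v ?_)
    rw [(hcolor e).1 hy]
    rcases hwd with h | h <;> simp [h]

/-- For `p` the larger endpoint position, the class of colour `p - 1` is that endpoint, or both
endpoints if `p = 1`. -/
lemma pathTDColoring_dominates_inr (e : G.edgeSet) : ∃ c, (∃ y, pathTDColoring G v y = c) ∧
      ∀ y, pathTDColoring G v y = c → (centralGraph G).Adj (.inr e) y := by
  obtain ⟨z, hz⟩ := e
  induction z using Sym2.ind with
  | _ a b =>
    have hab : (v.symm a : ℕ) ≠ v.symm b := fun h =>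
      (G.mem_edgeSet.1 hz).ne (val_symm_injective v h)
    refine ⟨max (v.symm a : ℕ) (v.symm b) - 1, ?_, ?_⟩
    · rcases le_total (v.symm a : ℕ) (v.symm b) with h | h
      · exact ⟨.inl b, by simp [pathTDColoring, h]⟩
      · exact ⟨.inl a, by simp [pathTDColoring, h]⟩
    · rintro (y | e') hy
      · simp only [pathTDColoring] at hy
        simp only [centralGraph_adj_inr_inl, Sym2.mem_iff]
        rcases (by omega : (v.symm y : ℕ) = v.symm a ∨ (v.symm y : ℕ) = v.symm b) with h | h
        · exact .inl (val_symm_injective v h)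
        · exact .inr (val_symm_injective v h)
      · have := le_subdivColor m ((e' : Sym2 V).map (Fin.val ∘ v.symm))
        have := (v.symm a).isLt
        have := (v.symm b).isLt
        simp only [pathTDColoring] at hy
        omega

theorem isTDColoring_pathTDColoring (hm : 1 ≤ m)
    (hv : ∀ j : Fin m, G.Adj (v j.castSucc) (v j.succ)) :
    IsTDColoring (centralGraph G) (pathTDColoring G v) := by
  refine ⟨pathTDColoring_proper v hm hv, ?_⟩
  rintro (w | e)
  · exact pathTDColoring_dominates_inl v hm hv w
  · exact pathTDColoring_dominates_inr v e

end HamiltonianPath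

section LowerBound

variable {V : Type*} {G : SimpleGraph V} {m : ℕ}

lemma card_filter_subset_pathEdge_add_card_le [DecidableEq V] (v : Fin (m + 1) ≃ V) {C : Finset V}
    (hC : C.Nonempty) (hC2 : #C ≤ 2) :
    #{j : Fin m | C ⊆ {v j.castSucc, v j.succ}} + #C ≤ 3 := by
  obtain ⟨x, hx⟩ := hC
  have hpos : ∀ y ∈ C, ∀ j : Fin m, C ⊆ {v j.castSucc, v j.succ} →
      (v.symm y : ℕ) = j ∨ (v.symm y : ℕ) = j + 1 := by
    intro y hy j hj
    rcases mem_insert.1 (hj hy) with rfl | hy'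
    · simp
    · simp [mem_singleton.1 hy']
  have hC1 : 1 ≤ #C := card_pos.2 ⟨x, hx⟩
  rcases (by omega : #C = 1 ∨ #C = 2) with h1 | h2
  · have : #{j : Fin m | C ⊆ {v j.castSucc, v j.succ}} ≤
        #{(v.symm x : ℕ) - 1, (v.symm x : ℕ)} := by
      refine card_le_card_of_injOn (fun j => (j : ℕ)) (fun j hj => ?_) Fin.val_injective.injOn
      have := hpos x hx j (mem_filter.1 hj).2
      simp only [coe_insert, coe_singleton, Set.mem_insert_iff, Set.mem_singleton_iff]
      omega
    have := card_le_two (a := (v.symm x : ℕ) - 1) (b := v.symm x)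
    omega
  · obtain ⟨y, hy, hyx⟩ := exists_mem_ne (s := C) (by omega) x
    have hxy : (v.symm x : ℕ) ≠ v.symm y := fun h => hyx (val_symm_injective v h).symm
    have : #{j : Fin m | C ⊆ {v j.castSucc, v j.succ}} ≤ 1 := by
      refine card_le_one.2 fun j hj j' hj' => Fin.ext ?_
      have := hpos x hx j (mem_filter.1 hj).2
      have := hpos y hy j (mem_filter.1 hj).2
      have := hpos x hx j' (mem_filter.1 hj').2
      have := hpos y hy j' (mem_filter.1 hj').2
      omega
    omega

lemma add_card_le_three_mul_card_image [Fintype V] [Fintype G.edgeSet] (v : Fin (m + 1) ≃ V)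
    (hv : ∀ j : Fin m, G.Adj (v j.castSucc) (v j.succ)) (f : V ⊕ G.edgeSet → ℕ)
    (φ : G.edgeSet → ℕ) (hφne : ∀ e, ∃ x, f (.inl x) = φ e)
    (hφ : ∀ e y, f y = φ e → ∃ x ∈ (e : Sym2 V), y = .inl x) :
    m + #{w | f (.inl w) ∈ univ.image φ} ≤ 3 * #(univ.image φ) := by
  classical
  let P (j : Fin m) : G.edgeSet := ⟨s(v j.castSucc, v j.succ), hv j⟩
  have hfiber : ∀ c ∈ univ.image φ, #{j | φ (P j) = c} + #{w | f (.inl w) = c} ≤ 3 := by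
    intro c hc
    obtain ⟨e, -, rfl⟩ := mem_image.1 hc
    have hclass (e' : G.edgeSet) (hee' : φ e' = φ e) {w : V} (hw : f (.inl w) = φ e) :
        w ∈ (e' : Sym2 V) := by
      obtain ⟨x, hx, hxw⟩ := hφ e' (.inl w) (hw.trans hee'.symm)
      rwa [Sum.inl.inj hxw]
    obtain ⟨⟨a, b⟩, hab⟩ := Sym2.mk_surjective (e : Sym2 V)
    refine le_trans (Nat.add_le_add_right (card_le_card fun j hj => ?_) _)
      (card_filter_subset_pathEdge_add_card_le v ?_ ?_)
    · refine mem_filter.2 ⟨mem_univ _, fun w hw => ?_⟩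
      have := hclass (P j) (mem_filter.1 hj).2 (mem_filter.1 hw).2
      simpa [P] using this
    · obtain ⟨x, hx⟩ := hφne e
      exact ⟨x, mem_filter.2 ⟨mem_univ _, hx⟩⟩
    · refine (card_le_card (t := {a, b}) fun w hw => ?_).trans card_le_two
      have := hclass e rfl (mem_filter.1 hw).2
      rw [← hab] at this
      simpa using this
  calc m + #{w | f (.inl w) ∈ univ.image φ}
      = ∑ c ∈ univ.image φ, #{j | φ (P j) = c} +
          ∑ c ∈ univ.image φ, #{w | f (.inl w) = c} := by
        rw [← card_eq_sum_card_fiberwise (s := univ) (f := fun j => φ (P j))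
          (fun j _ => mem_image_of_mem φ (mem_univ _)), sum_card_fiberwise_eq_card_filter,
          card_univ, Fintype.card_fin]
    _ = ∑ c ∈ univ.image φ, (#{j | φ (P j) = c} + #{w | f (.inl w) = c}) :=
        sum_add_distrib.symm
    _ ≤ ∑ _c ∈ univ.image φ, 3 := sum_le_sum hfiber
    _ = 3 * #(univ.image φ) := by rw [sum_const, smul_eq_mul, mul_comm]

lemma injOn_color_of_notMem_image [Fintype G.edgeSet] {f : V ⊕ G.edgeSet → ℕ}
    (hf : IsTDColoring (centralGraph G) f) (φ : G.edgeSet → ℕ)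
    (hφne : ∀ e, ∃ x, f (.inl x) = φ e) (hφ : ∀ e y, f y = φ e → ∃ x ∈ (e : Sym2 V), y = .inl x) :
    Set.InjOn (fun w => f (.inl w)) {w | f (.inl w) ∉ univ.image φ} := by
  intro a ha b hb hab
  by_contra hne
  by_cases hadj : G.Adj a b
  · let e : G.edgeSet := ⟨s(a, b), hadj⟩
    obtain ⟨x, hx⟩ := hφne e
    obtain ⟨x', hx', hxx'⟩ := hφ e (.inl x) hx
    cases hxx'
    rcases Sym2.mem_iff.1 hx' with rfl | rfl
    · exact ha (hx ▸ mem_image_of_mem φ (mem_univ e))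
    · exact hb (hx ▸ mem_image_of_mem φ (mem_univ e))
  · exact hf.1 _ _ (centralGraph_adj_inl_inl.2 ⟨hne, hadj⟩) hab

theorem IsTDColoring.two_mul_add_three_le_three_mul [Fintype V] (v : Fin (m + 1) ≃ V)
    (hv : ∀ j : Fin m, G.Adj (v j.castSucc) (v j.succ)) (hm : 1 ≤ m) {f : V ⊕ G.edgeSet → ℕ}
    (hf : IsTDColoring (centralGraph G) f) {k : ℕ} (hk : ∀ x, f x < k) : 2 * m + 3 ≤ 3 * k := by
  classical
  choose φ hφne hφ using hf.exists_class_subset_edge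
  set T := univ.image φ
  set W : Finset V := {w | f (.inl w) ∈ T}
  let e₀ : G.edgeSet := ⟨s(v (Fin.castSucc ⟨0, hm⟩), v (Fin.succ ⟨0, hm⟩)), hv ⟨0, hm⟩⟩
  set S := insert (f (.inr e₀)) (Wᶜ.image fun w => f (.inl w))
  have hcount : m + #W ≤ 3 * #T := add_card_le_three_mul_card_image v hv f φ hφne hφ
  have hS : m + 1 ≤ #S + #W := by
    rw [← Fintype.card_fin (m + 1), ← Fintype.card_congr v.symm, ← card_compl_add_card W,
      ← card_image_of_injOn ((injOn_color_of_notMem_image hf φ hφne hφ).mono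
        fun w hw => by simpa [W, T] using hw)]
    exact Nat.add_le_add_right (card_le_card (subset_insert _ _)) _
  have hTS : Disjoint T S := by
    refine disjoint_insert_right.2 ⟨fun h => ?_, disjoint_right.2 fun c hc hcT => ?_⟩
    · obtain ⟨e, -, he⟩ := mem_image.1 h
      obtain ⟨x, -, hx⟩ := hφ e (.inr e₀) he.symm
      cases hx
    · obtain ⟨w, hw, rfl⟩ := mem_image.1 hc
      exact mem_compl.1 hw (mem_filter.2 ⟨mem_univ _, hcT⟩)
  have hTSk : T ∪ S ⊆ range k := by
    intro c hc
    rw [mem_range]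
    rcases mem_union.1 hc with hc | hc
    · obtain ⟨e, -, rfl⟩ := mem_image.1 hc
      obtain ⟨x, hx⟩ := hφne e
      exact hx ▸ hk _
    rcases mem_insert.1 hc with rfl | hc
    · exact hk _
    · obtain ⟨w, -, rfl⟩ := mem_image.1 hc
      exact hk _
  have hk' := card_le_card hTSk
  rw [card_union_of_disjoint hTS, card_range] at hk'
  have : 0 < #S := card_pos.2 (insert_nonempty _ _)
  omega

end LowerBound

theorem tdcn_central_bounds_hamiltonian {V : Type*} [Fintype V]
    (G : SimpleGraph V) (n : ℕ) (hn : Fintype.card V = n) (hn2 : 2 ≤ n)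
    (hham : ∃ (u v : V) (p : G.Walk u v), p.IsPath ∧ ∀ w, w ∈ p.support) :
    2 * n / 3 + 1 ≤ tdcn (centralGraph G) ∧
    tdcn (centralGraph G) ≤ n + (n + 1) / 2 := by
  classical
  obtain ⟨u, w, p, hp, hsupp⟩ := hham
  obtain ⟨v, hv⟩ := hp.exists_finEquiv_adj hsupp
  obtain rfl : n = p.length + 1 := by rw [← hn, Fintype.card_congr v.symm, Fintype.card_fin]
  have hm : 1 ≤ p.length := by omega
  have hf := isTDColoring_pathTDColoring v hm hv
  obtain ⟨g, hg, hgk⟩ := exists_isTDColoring_lt_tdcn hf (pathTDColoring_lt v)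
  have := hg.two_mul_add_three_le_three_mul v hv hm hgk
  exact ⟨by omega, tdcn_le hf (pathTDColoring_lt v)⟩
end

section
/- For any connected graph G of order n ≥ 4, χ_d^t(C(G)) = n + ⌈n/2⌉ if and only if G is the complete graph K_n. -/
open SimpleGraph

-- adjacency rfl lemmas
lemma central_adj_ll {V : Type*} (G : SimpleGraph V) (u v : V) :
    (centralGraph G).Adj (Sum.inl u) (Sum.inl v) ↔ u ≠ v ∧ ¬ G.Adj u v := Iff.rfl

lemma central_adj_lr {V : Type*} (G : SimpleGraph V) (u : V) (e : G.edgeSet) :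
    (centralGraph G).Adj (Sum.inl u) (Sum.inr e) ↔ u ∈ (e : Sym2 V) := Iff.rfl

lemma central_adj_rl {V : Type*} (G : SimpleGraph V) (u : V) (e : G.edgeSet) :
    (centralGraph G).Adj (Sum.inr e) (Sum.inl u) ↔ u ∈ (e : Sym2 V) := Iff.rfl

lemma central_adj_rr {V : Type*} (G : SimpleGraph V) (e e' : G.edgeSet) :
    ¬ (centralGraph G).Adj (Sum.inr e) (Sum.inr e') := fun h => h

/-- Easy construction: if no vertex of `G` is universal, `n+1` colors suffice
for the central graph. -/
lemma constructB {V : Type*} [Fintype V] (G : SimpleGraph V) (n : ℕ)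
    (hn : Fintype.card V = n)
    (hfree : ∀ v : V, ∃ w, w ≠ v ∧ ¬ G.Adj v w)
    (k : ℕ) (hk : n + 1 ≤ k) :
    ∃ f, IsTDColoring (centralGraph G) f ∧ ∀ x, f x < k := by
  classical
  have σ : V ≃ Fin n := Fintype.equivFinOfCardEq hn
  refine ⟨Sum.elim (fun v => (σ v : ℕ)) (fun _ => n), ⟨?_, ?_⟩, ?_⟩
  · rintro (u | e) (v | e') hadj hfeq
    · exact hadj.1 (σ.injective (Fin.ext hfeq))
    · exact absurd hfeq (by simpa using (σ u).isLt.ne)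
    · exact absurd hfeq.symm (by simpa using (σ v).isLt.ne)
    · exact central_adj_rr G e e' hadj
  · have hcls : ∀ (u : V) (x : V ⊕ G.edgeSet),
        Sum.elim (fun v => (σ v : ℕ)) (fun _ => n) x = (σ u : ℕ) → x = Sum.inl u := by
      rintro u (w | e) h
      · simp only [Sum.elim_inl] at h
        exact congrArg Sum.inl (σ.injective (Fin.ext h))
      · exact absurd h.symm (by simpa using (σ u).isLt.ne)
    rintro (v | e)
    · obtain ⟨w, hwv, hnadj⟩ := hfree v
      refine ⟨(σ w : ℕ), ⟨Sum.inl w, rfl⟩, ?_⟩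
      intro x hx
      rw [hcls w x hx]
      exact (central_adj_ll G v w).mpr ⟨fun h => hwv h.symm, hnadj⟩
    · obtain ⟨u, hu⟩ : ∃ u, u ∈ (e : Sym2 V) := ⟨(e : Sym2 V).out.1, Sym2.out_fst_mem _⟩
      refine ⟨(σ u : ℕ), ⟨Sum.inl u, rfl⟩, ?_⟩
      intro x hx
      rw [hcls u x hx]
      exact (central_adj_rl G u e).mpr hu
  · rintro (v | e)
    · have := (σ v).isLt
      simp only [Sum.elim_inl]
      omega
    · simp only [Sum.elim_inr]
      omega

/-- Main construction: `z1z2` an edge, `W` a clique disjoint from `{z1,z2}`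
(dominated by paired edge classes), every other vertex dominated for free. -/
lemma constructA {V : Type*} [Fintype V] (G : SimpleGraph V) (n : ℕ)
    (hn : Fintype.card V = n)
    (z1 z2 : V) (hz : G.Adj z1 z2) (W : Finset V) (hW1 : z1 ∉ W) (hW2 : z2 ∉ W)
    (hWadj : ∀ u ∈ W, ∀ v ∈ W, u ≠ v → G.Adj u v)
    (hWnbr : ∀ w ∈ W, ∃ u, G.Adj w u)
    (hfree : ∀ v, v ∉ W → v ≠ z1 → v ≠ z2 →
      ∃ w, w ≠ v ∧ ¬ G.Adj v w ∧ w ≠ z1 ∧ w ≠ z2)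
    (k : ℕ) (hk : n + (W.card + 1) / 2 + 1 ≤ k) :
    ∃ f, IsTDColoring (centralGraph G) f ∧ ∀ x, f x < k := by
  classical
  have σ : V ≃ Fin n := Fintype.equivFinOfCardEq hn
  have hz12 : z1 ≠ z2 := hz.ne
  set m := W.card with hm
  set p := (m + 1) / 2 with hp
  have τ : {x // x ∈ W} ≃ Fin m := W.equivFin
  choose nbr hnbr using hWnbr
  -- the paired vertices
  have h2j : ∀ j : Fin p, 2 * (j : ℕ) < m := by
    intro j; have := j.isLt; omega
  set pair1 : Fin p → {x // x ∈ W} := fun j => τ.symm ⟨2 * (j : ℕ), h2j j⟩ with hpair1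
  set pair2 : Fin p → V := fun j =>
    if h : 2 * (j : ℕ) + 1 < m then (τ.symm ⟨2 * (j : ℕ) + 1, h⟩ : {x // x ∈ W})
    else nbr (pair1 j) (pair1 j).2 with hpair2
  have hp_adj : ∀ j, G.Adj (pair1 j) (pair2 j) := by
    intro j
    rw [hpair2]
    dsimp only
    split
    · refine hWadj _ (pair1 j).2 _ (τ.symm _).2 ?_
      intro hcoe
      have := τ.symm.injective (Subtype.coe_injective hcoe)
      simp only [Fin.mk.injEq] at this
      omega
    · exact hnbr _ _
  set pS : Fin p → Sym2 V := fun j => s((pair1 j : V), pair2 j) with hpS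
  have hmem1 : ∀ j, (pair1 j : V) ∈ pS j := fun j => Sym2.mem_mk_left _ _
  have hpS_ne_z : ∀ j, pS j ≠ s(z1, z2) := by
    intro j h
    have h1 : (pair1 j : V) ∈ s(z1, z2) := h ▸ hmem1 j
    rcases Sym2.mem_iff.mp h1 with h2 | h2
    · exact hW1 (h2 ▸ (pair1 j).2)
    · exact hW2 (h2 ▸ (pair1 j).2)
  -- injectivity of pS
  have hcoe_ne : ∀ (i i' : Fin m), (τ.symm i : V) = (τ.symm i' : V) → i = i' := by
    intro i i' h
    exact τ.symm.injective (Subtype.coe_injective h)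
  have hpS_inj : ∀ j j', pS j = pS j' → j = j' := by
    intro j j' h
    rw [hpS] at h
    dsimp only at h
    rw [Sym2.eq_iff] at h
    have hlast : ∀ jj : Fin p, ¬ (2 * (jj : ℕ) + 1 < m) → 2 * (jj : ℕ) = m - 1 := by
      intro jj hh; have := h2j jj; omega
    rcases h with ⟨h1, _⟩ | ⟨h1, h2⟩
    · have := hcoe_ne _ _ h1
      simp only [Fin.mk.injEq] at this
      exact Fin.ext (by omega)
    · -- pair1 j = pair2 j' and pair2 j = pair1 j'
      rw [hpair2] at h1 h2
      dsimp only at h1 h2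
      split at h1
      · have := hcoe_ne _ _ h1
        simp only [Fin.mk.injEq] at this
        omega
      · split at h2
        · have := hcoe_ne _ _ h2
          simp only [Fin.mk.injEq] at this
          omega
        · have e1 := hlast j' (by assumption)
          have e2 := hlast j (by assumption)
          have := h2j j; have := h2j j'
          exact Fin.ext (by omega)
  -- the coloring
  set g : G.edgeSet → ℕ := fun e =>
    if (e : Sym2 V) = s(z1, z2) then (σ z2 : ℕ)
    else if h : ∃ j : Fin p, (e : Sym2 V) = pS j then n + (h.choose : ℕ)
    else n + p with hg
  set base : V → ℕ := fun v => if v = z2 then (σ z1 : ℕ) else (σ v : ℕ) with hbase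
  set f : V ⊕ G.edgeSet → ℕ := Sum.elim base g with hf
  have hσlt : ∀ v : V, (σ v : ℕ) < n := fun v => (σ v).isLt
  have hbase_lt : ∀ v, base v < n := by
    intro v; rw [hbase]; dsimp only; split <;> exact hσlt _
  have hg_cases : ∀ e, g e = (σ z2 : ℕ) ∨ (n ≤ g e ∧ g e < n + p + 1) := by
    intro e; rw [hg]; dsimp only
    split
    · exact Or.inl rfl
    · right; split
      · have := (Exists.choose (p := fun j : Fin p => (e : Sym2 V) = pS j) ‹_›).isLt
        omega
      · omega
  have hg_z : ∀ e : G.edgeSet, g e = (σ z2 : ℕ) ↔ (e : Sym2 V) = s(z1, z2) := by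
    intro e
    constructor
    · intro h
      by_contra hne
      rw [hg] at h; dsimp only at h
      rw [if_neg hne] at h
      have := hσlt z2
      split at h <;> omega
    · intro h; rw [hg]; dsimp only; rw [if_pos h]
  have hg_pair : ∀ (j : Fin p) (e : G.edgeSet),
      g e = n + (j : ℕ) ↔ (e : Sym2 V) = pS j := by
    intro j e
    constructor
    · intro h
      rw [hg] at h; dsimp only at h
      split at h
      · have := hσlt z2; omega
      · split at h
        · next hex =>
          have hspec := hex.choose_spec
          have : hex.choose = j := Fin.ext (by omega)
          rwa [this] at hspec
        · have := j.isLt; omega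
    · intro h
      rw [hg]; dsimp only
      rw [if_neg (by rw [h]; exact hpS_ne_z j)]
      have hex : ∃ j' : Fin p, (e : Sym2 V) = pS j' := ⟨j, h⟩
      rw [dif_pos hex]
      have hspec := hex.choose_spec
      have : hex.choose = j := hpS_inj _ _ (by rw [← hspec, ← h])
      rw [this]
  have hbase_ne_g : ∀ (v : V) (e : G.edgeSet), base v ≠ g e := by
    intro v e h
    rcases hg_cases e with hc | hc
    · rw [hc] at h
      rw [hbase] at h; dsimp only at h
      split at h
      · exact hz12 (σ.injective (Fin.ext h))
      · exact ‹v ≠ z2› (σ.injective (Fin.ext h))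
    · have := hbase_lt v; omega
  -- class description lemmas
  have hcls_base : ∀ (u : V), u ≠ z1 → u ≠ z2 → ∀ x, f x = (σ u : ℕ) → x = Sum.inl u := by
    rintro u hu1 hu2 (w | e) h
    · rw [hf] at h; simp only [Sum.elim_inl] at h
      rw [hbase] at h; dsimp only at h
      split at h
      · exact absurd (σ.injective (Fin.ext h)).symm hu1
      · exact congrArg Sum.inl (σ.injective (Fin.ext h))
    · rw [hf] at h; simp only [Sum.elim_inr] at h
      rcases hg_cases e with hc | hc
      · rw [hc] at h
        exact absurd (σ.injective (Fin.ext h)).symm hu2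
      · have := hσlt u; omega
  have hzedge_mem : s(z1, z2) ∈ G.edgeSet := G.mem_edgeSet.mpr hz
  have hcls_z1 : ∀ x, f x = (σ z1 : ℕ) → x = Sum.inl z1 ∨ x = Sum.inl z2 := by
    rintro (w | e) h
    · rw [hf] at h; simp only [Sum.elim_inl] at h
      rw [hbase] at h; dsimp only at h
      split at h
      · right; exact congrArg Sum.inl ‹w = z2›
      · left; exact congrArg Sum.inl (σ.injective (Fin.ext h))
    · rw [hf] at h; simp only [Sum.elim_inr] at h
      rcases hg_cases e with hc | hc
      · rw [hc] at h
        exact absurd (σ.injective (Fin.ext h)).symm hz12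
      · have := hσlt z1; omega
  have hcls_z2 : ∀ x, f x = (σ z2 : ℕ) →
      x = Sum.inr (⟨s(z1, z2), hzedge_mem⟩ : G.edgeSet) := by
    rintro (w | e) h
    · rw [hf] at h; simp only [Sum.elim_inl] at h
      exact absurd h (hbase_ne_g w ⟨s(z1,z2), hzedge_mem⟩ ∘ (by
        intro hh
        rw [hh]
        exact ((hg_z _).mpr rfl).symm))
    · rw [hf] at h; simp only [Sum.elim_inr] at h
      have := (hg_z e).mp h
      exact congrArg Sum.inr (Subtype.ext this)
  have hpedge_mem : ∀ j, pS j ∈ G.edgeSet := fun j => G.mem_edgeSet.mpr (hp_adj j)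
  have hcls_pair : ∀ (j : Fin p) (x), f x = n + (j : ℕ) →
      x = Sum.inr (⟨pS j, hpedge_mem j⟩ : G.edgeSet) := by
    rintro j (w | e) h
    · rw [hf] at h; simp only [Sum.elim_inl] at h
      have := hbase_lt w; omega
    · rw [hf] at h; simp only [Sum.elim_inr] at h
      exact congrArg Sum.inr (Subtype.ext ((hg_pair j e).mp h))
  refine ⟨f, ⟨?_, ?_⟩, ?_⟩
  · -- properness
    rintro (u | e) (v | e') hadj hfeq
    · rw [hf] at hfeq; simp only [Sum.elim_inl] at hfeq
      rw [hbase] at hfeq; dsimp only at hfeq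
      rcases (central_adj_ll G u v).mp hadj with ⟨hne, hnadj⟩
      split at hfeq <;> split at hfeq
      · exact hne (by rw [‹u = z2›, ‹v = z2›])
      · exact hnadj (by rw [‹u = z2›, ← σ.injective (Fin.ext hfeq)]; exact hz.symm)
      · exact hnadj (by rw [‹v = z2›, σ.injective (Fin.ext hfeq)]; exact hz)
      · exact hne (σ.injective (Fin.ext hfeq))
    · rw [hf] at hfeq; simp only [Sum.elim_inl, Sum.elim_inr] at hfeq
      exact hbase_ne_g u e' hfeq
    · rw [hf] at hfeq; simp only [Sum.elim_inl, Sum.elim_inr] at hfeq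
      exact hbase_ne_g v e hfeq.symm
    · exact central_adj_rr G e e' hadj
  · -- total domination
    have hfinl : ∀ w : V, w ≠ z2 → f (Sum.inl w) = (σ w : ℕ) := by
      intro w hw
      rw [hf]; simp only [Sum.elim_inl]
      rw [hbase]; dsimp only; rw [if_neg hw]
    have hfinl2 : f (Sum.inl z2) = (σ z1 : ℕ) := by
      rw [hf]; simp only [Sum.elim_inl]
      rw [hbase]; dsimp only; rw [if_pos rfl]
    rintro (v | e)
    · by_cases hvW : v ∈ W
      · -- dominated by its pair class
        set i : Fin m := τ ⟨v, hvW⟩ with hi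
        have him : (i : ℕ) < m := i.isLt
        have hj2 : (i : ℕ) / 2 < p := by omega
        set j : Fin p := ⟨(i : ℕ) / 2, hj2⟩ with hj
        have hjval : (j : ℕ) = (i : ℕ) / 2 := by rw [hj]
        have hvmem : v ∈ pS j := by
          have hback : τ.symm i = ⟨v, hvW⟩ := τ.symm_apply_apply _
          rcases Nat.mod_two_eq_zero_or_one (i : ℕ) with hpar | hpar
          · have hfin : (⟨2 * (j : ℕ), h2j j⟩ : Fin m) = i := by
              apply Fin.ext
              show 2 * (j : ℕ) = (i : ℕ)
              omega
            have hp1 : pair1 j = ⟨v, hvW⟩ := by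
              rw [hpair1]; dsimp only
              rw [hfin, hback]
            rw [hpS]; dsimp only
            rw [hp1]
            exact Sym2.mem_mk_left _ _
          · have hlt : 2 * (j : ℕ) + 1 < m := by omega
            have hfin : (⟨2 * (j : ℕ) + 1, hlt⟩ : Fin m) = i := by
              apply Fin.ext
              show 2 * (j : ℕ) + 1 = (i : ℕ)
              omega
            have hp2 : pair2 j = v := by
              rw [hpair2]; dsimp only
              rw [dif_pos hlt, hfin, hback]
            rw [hpS]; dsimp only
            rw [hp2]
            exact Sym2.mem_mk_right _ _
        refine ⟨n + (j : ℕ), ⟨Sum.inr ⟨pS j, hpedge_mem j⟩, ?_⟩, ?_⟩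
        · rw [hf]; simp only [Sum.elim_inr]
          exact (hg_pair j _).mpr rfl
        · intro x hx
          rw [hcls_pair j x hx]
          exact (central_adj_lr G v _).mpr hvmem
      · by_cases hvz : v = z1 ∨ v = z2
        · refine ⟨(σ z2 : ℕ), ⟨Sum.inr ⟨s(z1, z2), hzedge_mem⟩, ?_⟩, ?_⟩
          · rw [hf]; simp only [Sum.elim_inr]
            exact (hg_z _).mpr rfl
          · intro x hx
            rw [hcls_z2 x hx]
            refine (central_adj_lr G v _).mpr ?_
            rcases hvz with h | h
            · rw [h]; exact Sym2.mem_mk_left _ _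
            · rw [h]; exact Sym2.mem_mk_right _ _
        · push_neg at hvz
          obtain ⟨hv1, hv2⟩ := hvz
          obtain ⟨w, hwv, hnadj, hwz1, hwz2⟩ := hfree v hvW hv1 hv2
          refine ⟨(σ w : ℕ), ⟨Sum.inl w, hfinl w hwz2⟩, ?_⟩
          intro x hx
          rw [hcls_base w hwz1 hwz2 x hx]
          exact (central_adj_ll G v w).mpr ⟨fun h => hwv h.symm, hnadj⟩
    · -- edge vertices
      obtain ⟨⟨u, v'⟩, hq⟩ := Quot.exists_rep (e : Sym2 V)
      have hq' : (e : Sym2 V) = s(u, v') := hq.symm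
      have hadj' : G.Adj u v' := G.mem_edgeSet.mp (hq' ▸ e.2)
      by_cases hez : (e : Sym2 V) = s(z1, z2)
      · refine ⟨(σ z1 : ℕ), ⟨Sum.inl z1, hfinl z1 hz12⟩, ?_⟩
        intro x hx
        rcases hcls_z1 x hx with rfl | rfl
        · exact (central_adj_rl G z1 e).mpr (by rw [hez]; exact Sym2.mem_mk_left _ _)
        · exact (central_adj_rl G z2 e).mpr (by rw [hez]; exact Sym2.mem_mk_right _ _)
      · have hx0 : ∃ x₀, x₀ ∈ (e : Sym2 V) ∧ x₀ ≠ z1 ∧ x₀ ≠ z2 := by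
          by_cases hu1 : u = z1
          · refine ⟨v', by rw [hq']; exact Sym2.mem_mk_right _ _, ?_, ?_⟩
            · intro h; rw [hu1, h] at hadj'; exact hadj'.ne rfl
            · intro h; exact hez (by rw [hq', hu1, h])
          · by_cases hu2 : u = z2
            · refine ⟨v', by rw [hq']; exact Sym2.mem_mk_right _ _, ?_, ?_⟩
              · intro h; exact hez (by rw [hq', hu2, h, Sym2.eq_swap])
              · intro h; rw [hu2, h] at hadj'; exact hadj'.ne rfl
            · exact ⟨u, by rw [hq']; exact Sym2.mem_mk_left _ _, hu1, hu2⟩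
        obtain ⟨x₀, hx₀mem, hx₀1, hx₀2⟩ := hx0
        refine ⟨(σ x₀ : ℕ), ⟨Sum.inl x₀, hfinl x₀ hx₀2⟩, ?_⟩
        intro x hx
        rw [hcls_base x₀ hx₀1 hx₀2 x hx]
        exact (central_adj_rl G x₀ e).mpr hx₀mem
  · rintro (v | e)
    · rw [hf]; simp only [Sum.elim_inl]
      have := hbase_lt v; omega
    · rw [hf]; simp only [Sum.elim_inr]
      rcases hg_cases e with hc | hc
      · rw [hc]; have := hσlt z2; omega
      · omega

/-- Lower bound: any TD-coloring of the central graph of the complete graph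
uses at least `n + ⌈n/2⌉` colors. -/
lemma lower_bound_top {V : Type*} [Fintype V] (n : ℕ) (hn : Fintype.card V = n)
    (hn4 : 4 ≤ n) (f : V ⊕ (⊤ : SimpleGraph V).edgeSet → ℕ)
    (hf : IsTDColoring (centralGraph (⊤ : SimpleGraph V)) f)
    (k : ℕ) (hfk : ∀ x, f x < k) : n + (n + 1) / 2 ≤ k := by
  classical
  obtain ⟨hprop, hdom⟩ := hf
  have hll : ∀ u v : V, ¬ (centralGraph (⊤ : SimpleGraph V)).Adj (Sum.inl u) (Sum.inl v) := by
    intro u v h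
    obtain ⟨h1, h2⟩ := (central_adj_ll _ u v).mp h
    exact h2 ((SimpleGraph.top_adj u v).mpr h1)
  choose dcol hdne hdadj using fun v : V => hdom (Sum.inl v)
  have hdedge : ∀ (v : V) w, f w = dcol v →
      ∃ e : (⊤ : SimpleGraph V).edgeSet, w = Sum.inr e ∧ v ∈ (e : Sym2 V) := by
    intro v w h
    have h2 := hdadj v w h
    cases w with
    | inl u => exact absurd h2 (hll v u)
    | inr e => exact ⟨e, rfl, (central_adj_lr _ v e).mp h2⟩
  have hsym3 : ∀ (z : Sym2 V) (a b c : V), a ∈ z → b ∈ z → c ∈ z →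
      a ≠ b → a ≠ c → b ≠ c → False := by
    intro z
    induction z using Sym2.ind with
    | _ x y =>
      intro a b c ha hb hc
      simp only [Sym2.mem_iff] at ha hb hc
      rcases ha with rfl | rfl <;> rcases hb with rfl | rfl <;>
        rcases hc with rfl | rfl <;> tauto
  set T : Finset V :=
    Finset.univ.filter (fun v : V => ∀ w, f w = f (Sum.inl v) → w = Sum.inl v) with hT
  set R : Finset V :=
    Finset.univ.filter (fun v : V => ¬ ∀ w, f w = f (Sum.inl v) → w = Sum.inl v) with hR
  have hTR : T.card + R.card = n := by
    rw [hT, hR, Finset.card_filter_add_card_filter_not, Finset.card_univ, hn]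
  have hTmem : ∀ t ∈ T, ∀ w, f w = f (Sum.inl t) → w = Sum.inl t := by
    intro t ht; exact (Finset.mem_filter.mp ht).2
  have hRmem : ∀ u ∈ R, ∃ w, f w = f (Sum.inl u) ∧ w ≠ Sum.inl u := by
    intro u hu
    have := (Finset.mem_filter.mp hu).2
    push_neg at this
    exact this
  -- key pair lemma
  have hpair : ∀ u v : V, u ∈ R → v ∈ R → u ≠ v →
      f (Sum.inl u) = f (Sum.inl v) ∧
      ∀ w, f w = f (Sum.inl u) → w = Sum.inl u ∨ w = Sum.inl v := by
    intro u v hu hv huv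
    have hmemE : s(u, v) ∈ (⊤ : SimpleGraph V).edgeSet :=
      (SimpleGraph.mem_edgeSet _).mpr ((SimpleGraph.top_adj u v).mpr huv)
    obtain ⟨c, ⟨w₀, hw₀⟩, hc⟩ := hdom (Sum.inr (⟨s(u, v), hmemE⟩ : (⊤ : SimpleGraph V).edgeSet))
    have hsub : ∀ w, f w = c → w = Sum.inl u ∨ w = Sum.inl v := by
      intro w hw
      have h2 := hc w hw
      cases w with
      | inl x =>
        have := (central_adj_rl _ x _).mp h2
        simp only [Sym2.mem_iff] at this
        rcases this with rfl | rfl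
        · exact Or.inl rfl
        · exact Or.inr rfl
      | inr e' => exact absurd h2 (central_adj_rr _ _ _)
    have hboth : f (Sum.inl u) = c ∧ f (Sum.inl v) = c := by
      rcases hsub w₀ hw₀ with rfl | rfl
      · refine ⟨hw₀, ?_⟩
        obtain ⟨w1, hw1, hw1ne⟩ := hRmem u hu
        rcases hsub w1 (by rw [hw1, hw₀]) with h | h
        · exact absurd h hw1ne
        · rw [← h, hw1, hw₀]
      · refine ⟨?_, hw₀⟩
        obtain ⟨w1, hw1, hw1ne⟩ := hRmem v hv
        rcases hsub w1 (by rw [hw1, hw₀]) with h | h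
        · rw [← h, hw1, hw₀]
        · exact absurd h hw1ne
    refine ⟨by rw [hboth.1, hboth.2], ?_⟩
    intro w hw
    exact hsub w (by rw [hw]; exact hboth.1)
  have hR2 : R.card ≤ 2 := by
    by_contra hcon
    push_neg at hcon
    obtain ⟨t3, ht3sub, ht3card⟩ := Finset.exists_subset_card_eq hcon
    obtain ⟨a, b, c, hab, hac, hbc, rfl⟩ := Finset.card_eq_three.mp ht3card
    have ha : a ∈ R := ht3sub (by simp)
    have hb : b ∈ R := ht3sub (by simp)
    have hc : c ∈ R := ht3sub (by simp)
    have h1 := hpair a b ha hb hab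
    have h2 := hpair a c ha hc hac
    rcases h1.2 (Sum.inl c) h2.1.symm with h | h
    · exact hac (Sum.inl_injective h.symm)
    · exact hbc (Sum.inl_injective h.symm)
  -- color families
  set S1 : Finset ℕ := T.image (fun v => f (Sum.inl v)) with hS1
  have hS1card : S1.card = T.card := by
    rw [hS1]
    apply Finset.card_image_of_injOn
    intro a ha b hb hab
    have := hTmem a ha (Sum.inl b) hab.symm
    exact (Sum.inl_injective this).symm
  set S2 : Finset ℕ := Finset.univ.image dcol with hS2
  have hfib2 : ∀ c, (Finset.univ.filter (fun v : V => dcol v = c)).card ≤ 2 := by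
    intro c
    by_contra hcon
    push_neg at hcon
    obtain ⟨t3, ht3sub, ht3card⟩ := Finset.exists_subset_card_eq hcon
    obtain ⟨a, b, d, hab, had, hbd, rfl⟩ := Finset.card_eq_three.mp ht3card
    have ha : dcol a = c := (Finset.mem_filter.mp (ht3sub (by simp))).2
    have hb : dcol b = c := (Finset.mem_filter.mp (ht3sub (by simp))).2
    have hd : dcol d = c := (Finset.mem_filter.mp (ht3sub (by simp))).2
    obtain ⟨w₀, hw₀⟩ := hdne a
    obtain ⟨e, rfl, hae⟩ := hdedge a w₀ hw₀
    obtain ⟨e', he', hbe⟩ := hdedge b (Sum.inr e) (by rw [hw₀, ha, hb])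
    rw [Sum.inr.injEq] at he'
    obtain ⟨e'', he'', hde⟩ := hdedge d (Sum.inr e) (by rw [hw₀, ha, hd])
    rw [Sum.inr.injEq] at he''
    exact hsym3 (e : Sym2 V) a b d hae (he' ▸ hbe) (he'' ▸ hde) hab had hbd
  have h2S2 : n ≤ 2 * S2.card := by
    have := Finset.card_le_mul_card_image (f := dcol) Finset.univ 2
      (fun c _ => hfib2 c)
    rwa [Finset.card_univ, hn] at this
  have hS2lower : (n + 1) / 2 ≤ S2.card := by omega
  have hS12 : Disjoint S1 S2 := by
    rw [Finset.disjoint_left]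
    intro c hc1 hc2
    obtain ⟨t, ht, hct⟩ := Finset.mem_image.mp hc1
    obtain ⟨v, _, hcv⟩ := Finset.mem_image.mp hc2
    obtain ⟨w₀, hw₀⟩ := hdne v
    obtain ⟨e, rfl, _⟩ := hdedge v w₀ hw₀
    have := hTmem t ht (Sum.inr e) (by rw [hw₀, hcv, hct])
    exact absurd this (by simp)
  have hfinal : ∀ S : Finset ℕ, (∀ c ∈ S, ∃ x, f x = c) → S.card ≤ k := by
    intro S hS
    have hsub : S ⊆ Finset.range k := by
      intro c hc
      obtain ⟨x, hx⟩ := hS c hc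
      rw [Finset.mem_range, ← hx]
      exact hfk x
    simpa using Finset.card_le_card hsub
  have hS1val : ∀ c ∈ S1, ∃ x, f x = c := by
    intro c hc
    obtain ⟨t, _, hct⟩ := Finset.mem_image.mp hc
    exact ⟨Sum.inl t, hct⟩
  have hS2val : ∀ c ∈ S2, ∃ x, f x = c := by
    intro c hc
    obtain ⟨v, _, hcv⟩ := Finset.mem_image.mp hc
    obtain ⟨w₀, hw₀⟩ := hdne v
    exact ⟨w₀, by rw [hw₀, hcv]⟩
  by_cases hR0 : R.card = 0
  · -- all classes of originals are singletons
    have hScard := hfinal (S1 ∪ S2) (by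
      intro c hc
      rcases Finset.mem_union.mp hc with h | h
      · exact hS1val c h
      · exact hS2val c h)
    rw [Finset.card_union_of_disjoint hS12, hS1card] at hScard
    omega
  · by_cases hR1 : R.card = 1
    · obtain ⟨w, hw⟩ := Finset.card_eq_one.mp hR1
      have hwR : w ∈ R := by rw [hw]; simp
      set cw := f (Sum.inl w) with hcw
      have hcw1 : cw ∉ S1 := by
        intro hmem
        obtain ⟨t, ht, hct⟩ := Finset.mem_image.mp hmem
        have := hTmem t ht (Sum.inl w) (by rw [← hcw, hct])
        have hwt : w = t := Sum.inl_injective this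
        obtain ⟨w1, hw1, hw1ne⟩ := hRmem w hwR
        exact hw1ne (hTmem t ht w1 (by rw [hw1, hwt]) ▸ by rw [hwt])
      have hcw2 : cw ∉ S2 := by
        intro hmem
        obtain ⟨v, _, hcv⟩ := Finset.mem_image.mp hmem
        exact hll v w (hdadj v (Sum.inl w) (by rw [← hcw, hcv]))
      have hScard := hfinal ((S1 ∪ S2) ∪ {cw}) (by
        intro c hc
        rcases Finset.mem_union.mp hc with h | h
        · rcases Finset.mem_union.mp h with h' | h'
          · exact hS1val c h'
          · exact hS2val c h'
        · exact ⟨Sum.inl w, by rw [Finset.mem_singleton.mp h]⟩)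
      rw [Finset.card_union_of_disjoint (by
            rw [Finset.disjoint_singleton_right]
            intro hmem
            rcases Finset.mem_union.mp hmem with h | h
            · exact hcw1 h
            · exact hcw2 h),
          Finset.card_union_of_disjoint hS12, hS1card, Finset.card_singleton] at hScard
      omega
    · have hR2' : R.card = 2 := by omega
      obtain ⟨u, v, huv, hRuv⟩ := Finset.card_eq_two.mp hR2'
      have hu : u ∈ R := by rw [hRuv]; simp
      have hv : v ∈ R := by rw [hRuv]; simp
      obtain ⟨hcpeq, hcls⟩ := hpair u v hu hv huv
      set cp := f (Sum.inl u) with hcp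
      set Ecol : Finset ℕ :=
        Finset.univ.image (fun e : (⊤ : SimpleGraph V).edgeSet => f (Sum.inr e)) with hEcol
      have hS2E : S2 ⊆ Ecol := by
        intro c hc
        obtain ⟨v₀, _, hcv⟩ := Finset.mem_image.mp hc
        obtain ⟨w₀, hw₀⟩ := hdne v₀
        obtain ⟨e, rfl, _⟩ := hdedge v₀ w₀ hw₀
        exact Finset.mem_image.mpr ⟨e, Finset.mem_univ e, by rw [hw₀, hcv]⟩
      have hS1E : Disjoint S1 Ecol := by
        rw [Finset.disjoint_left]
        intro c hc1 hc2
        obtain ⟨t, ht, hct⟩ := Finset.mem_image.mp hc1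
        obtain ⟨e, _, hce⟩ := Finset.mem_image.mp hc2
        have := hTmem t ht (Sum.inr e) (by rw [hce, hct])
        exact absurd this (by simp)
      have hcpE : cp ∉ Ecol := by
        intro hmem
        obtain ⟨e, _, hce⟩ := Finset.mem_image.mp hmem
        rcases hcls (Sum.inr e) hce with h | h <;> exact absurd h (by simp)
      have hcpS1 : cp ∉ S1 := by
        intro hmem
        obtain ⟨t, ht, hct⟩ := Finset.mem_image.mp hmem
        rcases hcls (Sum.inl t) hct with h | h
        · obtain ⟨w1, hw1, hw1ne⟩ := hRmem u hu
          have ht' : t = u := Sum.inl_injective h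
          exact hw1ne (by rw [← ht']; exact hTmem t ht w1 (by rw [hw1, ht']))
        · obtain ⟨w1, hw1, hw1ne⟩ := hRmem v hv
          have ht' : t = v := Sum.inl_injective h
          exact hw1ne (by
            rw [← ht']
            exact hTmem t ht w1 (by rw [hw1, ht']))
      have hEcard : (n + 1) / 2 + 1 ≤ Ecol.card := by
        by_contra hE
        push_neg at hE
        have hEq : S2 = Ecol := Finset.eq_of_subset_of_card_le hS2E (by omega)
        have hS2top : S2.card ≤ (n + 1) / 2 := by rw [hEq]; omega
        set P : ℕ → Prop := fun c => ∃ v1 v2 : V, v1 ≠ v2 ∧ dcol v1 = c ∧ dcol v2 = c with hP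
        set F : ℕ → ℕ := fun c => (Finset.univ.filter (fun v : V => dcol v = c)).card with hF
        set FE : ℕ → ℕ := fun c =>
          (Finset.univ.filter (fun e : (⊤ : SimpleGraph V).edgeSet => f (Sum.inr e) = c)).card with hFE
        have hcover : n = ∑ c ∈ S2, F c := by
          have := Finset.card_eq_sum_card_fiberwise
            (f := dcol) (s := Finset.univ) (t := S2)
            (fun x _ => Finset.mem_image_of_mem dcol (Finset.mem_univ x))
          rwa [Finset.card_univ, hn] at this
        have hsplit : ∑ c ∈ S2.filter P, F c + ∑ c ∈ S2.filter (fun c => ¬ P c), F c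
            = ∑ c ∈ S2, F c := Finset.sum_filter_add_sum_filter_not _ _ _
        have hb2 : ∑ c ∈ S2.filter P, F c ≤ 2 * (S2.filter P).card := by
          calc ∑ c ∈ S2.filter P, F c ≤ ∑ _c ∈ S2.filter P, 2 :=
                Finset.sum_le_sum (fun c _ => hfib2 c)
            _ = 2 * (S2.filter P).card := by rw [Finset.sum_const, smul_eq_mul, mul_comm]
        have hs1 : ∑ c ∈ S2.filter (fun c => ¬ P c), F c ≤ (S2.filter (fun c => ¬ P c)).card := by
          calc ∑ c ∈ S2.filter (fun c => ¬ P c), F c ≤ ∑ _c ∈ S2.filter (fun c => ¬ P c), 1 := by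
                refine Finset.sum_le_sum (fun c hc => ?_)
                rw [hF]
                refine Finset.card_le_one.mpr ?_
                intro a ha b hb
                have ha' := (Finset.mem_filter.mp ha).2
                have hb' := (Finset.mem_filter.mp hb).2
                by_contra hab
                exact (Finset.mem_filter.mp hc).2 ⟨a, b, hab, ha', hb'⟩
            _ = (S2.filter (fun c => ¬ P c)).card := by simp
        -- edge counting
        have hEtot : Fintype.card ((⊤ : SimpleGraph V).edgeSet) = n.choose 2 := by
          rw [← hn, ← SimpleGraph.card_edgeFinset_top_eq_card_choose_two]
          exact (SimpleGraph.edgeFinset_card (G := (⊤ : SimpleGraph V))).symm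
        have hcoverE : n.choose 2 = ∑ c ∈ S2, FE c := by
          have := Finset.card_eq_sum_card_fiberwise
            (f := fun e : (⊤ : SimpleGraph V).edgeSet => f (Sum.inr e))
            (s := Finset.univ) (t := S2)
            (fun e _ => by
              rw [hEq]
              exact Finset.mem_image_of_mem _ (Finset.mem_univ e))
          rwa [Finset.card_univ, hEtot] at this
        have hsplitE : ∑ c ∈ S2.filter P, FE c + ∑ c ∈ S2.filter (fun c => ¬ P c), FE c
            = ∑ c ∈ S2, FE c := Finset.sum_filter_add_sum_filter_not _ _ _
        have hbigE : ∑ c ∈ S2.filter P, FE c ≤ (S2.filter P).card := by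
          calc ∑ c ∈ S2.filter P, FE c ≤ ∑ _c ∈ S2.filter P, 1 := by
                refine Finset.sum_le_sum (fun c hc => ?_)
                obtain ⟨v1, v2, hv12, hd1, hd2⟩ := (Finset.mem_filter.mp hc).2
                rw [hFE]
                refine Finset.card_le_one.mpr ?_
                intro e1 he1 e2 he2
                have he1' := (Finset.mem_filter.mp he1).2
                have he2' := (Finset.mem_filter.mp he2).2
                have h11 : v1 ∈ (e1 : Sym2 V) :=
                  (central_adj_lr _ v1 e1).mp (hdadj v1 (Sum.inr e1) (by rw [he1', hd1]))
                have h12 : v2 ∈ (e1 : Sym2 V) :=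
                  (central_adj_lr _ v2 e1).mp (hdadj v2 (Sum.inr e1) (by rw [he1', hd2]))
                have h21 : v1 ∈ (e2 : Sym2 V) :=
                  (central_adj_lr _ v1 e2).mp (hdadj v1 (Sum.inr e2) (by rw [he2', hd1]))
                have h22 : v2 ∈ (e2 : Sym2 V) :=
                  (central_adj_lr _ v2 e2).mp (hdadj v2 (Sum.inr e2) (by rw [he2', hd2]))
                have he1v : (e1 : Sym2 V) = s(v1, v2) := (Sym2.mem_and_mem_iff hv12).mp ⟨h11, h12⟩
                have he2v : (e2 : Sym2 V) = s(v1, v2) := (Sym2.mem_and_mem_iff hv12).mp ⟨h21, h22⟩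
                exact Subtype.ext (by rw [he1v, he2v])
            _ = (S2.filter P).card := by simp
        have hsmlE : ∑ c ∈ S2.filter (fun c => ¬ P c), FE c
            ≤ (S2.filter (fun c => ¬ P c)).card * (n - 1) := by
          calc ∑ c ∈ S2.filter (fun c => ¬ P c), FE c
              ≤ ∑ _c ∈ S2.filter (fun c => ¬ P c), (n - 1) := by
                refine Finset.sum_le_sum (fun c hc => ?_)
                obtain ⟨v₀, _, hv₀⟩ := Finset.mem_image.mp (Finset.mem_filter.mp hc).1
                rw [hFE]
                have hbound : (Finset.univ.erase v₀).card = n - 1 := by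
                  rw [Finset.card_erase_of_mem (Finset.mem_univ _), Finset.card_univ, hn]
                rw [← hbound]
                refine Finset.card_le_card_of_injOn
                  (fun e => if h : v₀ ∈ (e : Sym2 V) then Sym2.Mem.other h else v₀) ?_ ?_
                · intro e he
                  have he' := (Finset.mem_filter.mp he).2
                  have hv₀e : v₀ ∈ (e : Sym2 V) :=
                    (central_adj_lr _ v₀ e).mp (hdadj v₀ (Sum.inr e) (by rw [he', hv₀]))
                  simp only [dif_pos hv₀e]
                  refine Finset.mem_erase.mpr ⟨?_, Finset.mem_univ _⟩
                  intro hother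
                  have hspec := Sym2.other_spec hv₀e
                  rw [hother] at hspec
                  have : (⊤ : SimpleGraph V).Adj v₀ v₀ := by
                    rw [← SimpleGraph.mem_edgeSet, hspec]
                    exact e.2
                  exact this.ne rfl
                · intro e1 he1 e2 he2 heq
                  simp only [Finset.coe_filter, Set.mem_setOf_eq] at he1 he2
                  have hv₀e1 : v₀ ∈ (e1 : Sym2 V) :=
                    (central_adj_lr _ v₀ e1).mp (hdadj v₀ (Sum.inr e1) (by rw [he1.2, hv₀]))
                  have hv₀e2 : v₀ ∈ (e2 : Sym2 V) :=
                    (central_adj_lr _ v₀ e2).mp (hdadj v₀ (Sum.inr e2) (by rw [he2.2, hv₀]))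
                  simp only [dif_pos hv₀e1, dif_pos hv₀e2] at heq
                  have hs1' := Sym2.other_spec hv₀e1
                  have hs2' := Sym2.other_spec hv₀e2
                  apply Subtype.ext
                  rw [← hs1', ← hs2', heq]
            _ = (S2.filter (fun c => ¬ P c)).card * (n - 1) := by
                rw [Finset.sum_const, smul_eq_mul]
        -- arithmetic finale
        have hbs : (S2.filter P).card + (S2.filter (fun c => ¬ P c)).card = S2.card :=
          Finset.card_filter_add_card_filter_not _
        have hsc1 : (S2.filter (fun c => ¬ P c)).card ≤ 1 := by omega
        have hmulbound : (S2.filter (fun c => ¬ P c)).card * (n - 1) ≤ n - 1 := by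
          calc (S2.filter (fun c => ¬ P c)).card * (n - 1) ≤ 1 * (n - 1) :=
                Nat.mul_le_mul_right _ hsc1
            _ = n - 1 := one_mul _
        have h2C : 2 * n.choose 2 = n * (n - 1) := by
          rw [Nat.choose_two_right]
          refine Nat.mul_div_cancel' ?_
          obtain ⟨n', rfl⟩ : ∃ n', n = n' + 1 := ⟨n - 1, by omega⟩
          simpa [mul_comm] using (Nat.even_mul_succ_self n').two_dvd
        have hmul4 : 4 * (n - 1) ≤ n * (n - 1) := Nat.mul_le_mul_right _ hn4
        set nn := n * (n - 1) with hnn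
        omega
      have hScard := hfinal ((S1 ∪ Ecol) ∪ {cp}) (by
        intro c hc
        rcases Finset.mem_union.mp hc with h | h
        · rcases Finset.mem_union.mp h with h' | h'
          · exact hS1val c h'
          · obtain ⟨e, _, hce⟩ := Finset.mem_image.mp h'
            exact ⟨Sum.inr e, hce⟩
        · exact ⟨Sum.inl u, by rw [Finset.mem_singleton.mp h]⟩)
      rw [Finset.card_union_of_disjoint (by
            rw [Finset.disjoint_singleton_right]
            intro hmem
            rcases Finset.mem_union.mp hmem with h | h
            · exact hcpS1 h
            · exact hcpE h),
          Finset.card_union_of_disjoint hS1E, hS1card, Finset.card_singleton] at hScard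
      omega

lemma exists_nonadj {V : Type*} (G : SimpleGraph V) (h : G ≠ ⊤) :
    ∃ a b, a ≠ b ∧ ¬ G.Adj a b := by
  by_contra hc
  push_neg at hc
  apply h
  ext u v
  simp only [SimpleGraph.top_adj]
  exact ⟨fun hadj => hadj.ne, fun hne => hc u v hne⟩

theorem tdcn_central_eq_max_iff_complete' {V : Type*} [Fintype V]
    (G : SimpleGraph V) (n : ℕ) (hn : Fintype.card V = n) (hn4 : 4 ≤ n) :
    tdcn (centralGraph G) = n + (n + 1) / 2 ↔ G = ⊤ := by
  classical
  constructor
  · intro heq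
    by_contra hne
    obtain ⟨a, b, hab, hnadj⟩ := exists_nonadj G hne
    have hmem : ∃ f : (V ⊕ G.edgeSet) → ℕ, IsTDColoring (centralGraph G) f ∧
        ∀ v, f v < n + (n + 1) / 2 - 1 := by
      by_cases huniv : ∃ u : V, ∀ w, w ≠ u → G.Adj u w
      · obtain ⟨u, hu⟩ := huniv
        have hua : u ≠ a := by
          rintro rfl
          exact hnadj (hu b (fun h => hab h.symm))
        have hub : u ≠ b := by
          rintro rfl
          exact hnadj ((hu a (fun h => hab h)).symm)
        have hlt3 : ({a, b, u} : Finset V).card < n := by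
          have h1 := Finset.card_insert_le a ({b, u} : Finset V)
          have h2 := Finset.card_insert_le b ({u} : Finset V)
          have h3 : ({u} : Finset V).card = 1 := Finset.card_singleton u
          omega
        obtain ⟨z2, hz2⟩ : ∃ z2, z2 ∉ ({a, b, u} : Finset V) := by
          have hne' : (Finset.univ \ ({a, b, u} : Finset V)).Nonempty := by
            rw [← Finset.card_pos, Finset.card_sdiff_of_subset (Finset.subset_univ _), Finset.card_univ, hn]
            omega
          obtain ⟨z2, hz2⟩ := hne'
          exact ⟨z2, (Finset.mem_sdiff.mp hz2).2⟩
        simp only [Finset.mem_insert, Finset.mem_singleton] at hz2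
        push_neg at hz2
        obtain ⟨hz2a, hz2b, hz2u⟩ := hz2
        have hz : G.Adj u z2 := hu z2 hz2u
        set W' : Finset V := Finset.univ.filter (fun v =>
          v ≠ a ∧ v ≠ b ∧ v ≠ u ∧ v ≠ z2 ∧
          ∀ w, w ≠ v → ¬ G.Adj v w → (w = u ∨ w = z2)) with hW'
        have hmemW : ∀ v ∈ W', v ≠ a ∧ v ≠ b ∧ v ≠ u ∧ v ≠ z2 ∧
            ∀ w, w ≠ v → ¬ G.Adj v w → (w = u ∨ w = z2) := by
          intro v hv; exact (Finset.mem_filter.mp hv).2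
        have hWcard : W'.card ≤ n - 4 := by
          have hsub : W' ⊆ Finset.univ \ ({a, b, u, z2} : Finset V) := by
            intro x hx
            obtain ⟨h1, h2, h3, h4, _⟩ := hmemW x hx
            rw [Finset.mem_sdiff]
            refine ⟨Finset.mem_univ _, ?_⟩
            simp only [Finset.mem_insert, Finset.mem_singleton]
            push_neg
            exact ⟨h1, h2, h3, h4⟩
          have hq4 : ({a, b, u, z2} : Finset V).card = 4 := by
            rw [Finset.card_insert_of_notMem (by
                  simp only [Finset.mem_insert, Finset.mem_singleton]
                  push_neg
                  exact ⟨hab, Ne.symm hua, Ne.symm hz2a⟩),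
                Finset.card_insert_of_notMem (by
                  simp only [Finset.mem_insert, Finset.mem_singleton]
                  push_neg
                  exact ⟨Ne.symm hub, Ne.symm hz2b⟩),
                Finset.card_insert_of_notMem (by
                  simp only [Finset.mem_singleton]
                  exact Ne.symm hz2u),
                Finset.card_singleton]
          have := Finset.card_le_card hsub
          rw [Finset.card_sdiff_of_subset (Finset.subset_univ _), Finset.card_univ, hn, hq4] at this
          exact this
        refine constructA G n hn u z2 hz W' ?_ ?_ ?_ ?_ ?_ _ ?_
        · intro hmem'
          exact (hmemW u hmem').2.2.1 rfl
        · intro hmem'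
          exact (hmemW z2 hmem').2.2.2.1 rfl
        · intro x hx y hy hxy
          by_contra hna
          obtain ⟨_, _, hyu, hyz2, _⟩ := hmemW y hy
          rcases (hmemW x hx).2.2.2.2 y (Ne.symm hxy) hna with h | h
          · exact hyu h
          · exact hyz2 h
        · intro x hx
          refine ⟨a, ?_⟩
          by_contra hna
          obtain ⟨hxa, _, _, _, hprop⟩ := hmemW x hx
          rcases hprop a (Ne.symm hxa) hna with h | h
          · exact hua h.symm
          · exact hz2a h.symm
        · intro v hvW hvu hvz2
          by_cases hva : v = a
          · exact ⟨b, by rw [hva]; exact Ne.symm hab, by rw [hva]; exact hnadj,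
              Ne.symm hub, Ne.symm hz2b⟩
          · by_cases hvb : v = b
            · exact ⟨a, by rw [hvb]; exact hab, by rw [hvb]; exact fun h => hnadj h.symm,
                Ne.symm hua, Ne.symm hz2a⟩
            · rw [hW'] at hvW
              simp only [Finset.mem_filter, Finset.mem_univ, true_and] at hvW
              push_neg at hvW
              obtain ⟨w, hw1, hw2, hw3, hw4⟩ := hvW hva hvb hvu hvz2
              exact ⟨w, hw1, hw2, hw3, hw4⟩
        · omega
      · push_neg at huniv
        exact constructB G n hn (fun v => huniv v) _ (by omega)
    have hle : tdcn (centralGraph G) ≤ n + (n + 1) / 2 - 1 := Nat.sInf_le hmem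
    omega
  · rintro rfl
    have hmemtop : ∃ f : (V ⊕ (⊤ : SimpleGraph V).edgeSet) → ℕ,
        IsTDColoring (centralGraph (⊤ : SimpleGraph V)) f ∧
        ∀ v, f v < n + (n + 1) / 2 := by
      obtain ⟨z1, z2, hz12⟩ := Fintype.exists_pair_of_one_lt_card (α := V) (by rw [hn]; omega)
      have hz : (⊤ : SimpleGraph V).Adj z1 z2 := (SimpleGraph.top_adj _ _).mpr hz12
      set W : Finset V := (Finset.univ.erase z1).erase z2 with hW
      have hz1W : z1 ∉ W := fun h => (Finset.mem_erase.mp (Finset.mem_of_mem_erase h)).1 rfl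
      have hz2W : z2 ∉ W := fun h => (Finset.mem_erase.mp h).1 rfl
      have hWcard : W.card = n - 2 := by
        rw [hW, Finset.card_erase_of_mem (Finset.mem_erase.mpr ⟨Ne.symm hz12, Finset.mem_univ _⟩),
          Finset.card_erase_of_mem (Finset.mem_univ _), Finset.card_univ, hn]
        omega
      refine constructA ⊤ n hn z1 z2 hz W hz1W hz2W ?_ ?_ ?_ _ ?_
      · intro x _ y _ hxy
        exact (SimpleGraph.top_adj _ _).mpr hxy
      · intro w hw
        exact ⟨z1, (SimpleGraph.top_adj _ _).mpr
          (Finset.mem_erase.mp (Finset.mem_of_mem_erase hw)).1⟩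
      · intro v hvW hv1 hv2
        exact absurd (Finset.mem_erase.mpr ⟨hv2, Finset.mem_erase.mpr ⟨hv1, Finset.mem_univ _⟩⟩) hvW
      · rw [hWcard]
        omega
    apply le_antisymm
    · exact Nat.sInf_le hmemtop
    · refine le_csInf ⟨_, hmemtop⟩ ?_
      rintro k ⟨f, hf, hfk⟩
      exact lower_bound_top n hn hn4 f hf k hfk

theorem tdcn_central_eq_max_iff_complete {V : Type*} [Fintype V]
    (G : SimpleGraph V) (n : ℕ) (hn : Fintype.card V = n) (hn4 : 4 ≤ n)
    (hconn : G.Connected) :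
    tdcn (centralGraph G) = n + (n + 1) / 2 ↔ G = ⊤ :=
  tdcn_central_eq_max_iff_complete' G n hn hn4
end

section
/- For any connected graph G of order n ≥ 4, the total domination number of its central graph satisfies 3 ≤ γ_t(C(G)) ≤ n + ⌈n/2⌉ − 1. -/
open SimpleGraph

/-!
A total dominating set `S` of `C(G)` with at most two elements must be an edge `{x, y}` of
`C(G)`. Two subdivision vertices are never adjacent. If `S = {u, c_e}`, every subdivision
vertex is dominated by `u`, so every edge of `G` contains `u`; a vertex outside `e` is then a
`G`-neighbour of `u` and is dominated by neither. If `S = {u, v}` with `u, v` non-adjacent in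
`G`, every edge of `G` meets `{u, v}`, so by connectivity `u` and `v` have a common neighbour,
which again is dominated by neither.

For the upper bound, the original vertices dominate every subdivision vertex and every
non-universal vertex of `G`. The `k` universal vertices form a clique, so pairing them up
gives `⌈k/2⌉` subdivision vertices dominating them. If `G` is complete, one original vertex can
be dropped; otherwise there are at most `n - 2` universal vertices.
-/
def IsTotalDominating {W : Type*} (H : SimpleGraph W) (S : Set W) : Prop :=
  ∀ v, ∃ u ∈ S, H.Adj v u

section TotalDomination
variable {W : Type*} {H : SimpleGraph W}

lemma tdn_le_ncard {S : Set W} (hS : IsTotalDominating H S) : tdn H ≤ S.ncard :=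
  Nat.sInf_le ⟨S, rfl, hS⟩

lemma le_tdn {k : ℕ} (hex : ∃ S, IsTotalDominating H S)
    (hk : ∀ S, IsTotalDominating H S → k ≤ S.ncard) : k ≤ tdn H := by
  obtain ⟨S, hS⟩ := hex
  exact le_csInf ⟨_, S, rfl, hS⟩ fun _ ⟨T, hT, hTdom⟩ => hT ▸ hk T hTdom

lemma IsTotalDominating.adj_of_pair {x y : W} (h : IsTotalDominating H {x, y}) : H.Adj x y := by
  obtain ⟨u, hu, hxu⟩ := h x
  rcases hu with rfl | rfl
  · exact absurd hxu (H.loopless.irrefl u)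
  · exact hxu

lemma IsTotalDominating.three_le_ncard [Finite W] [Nonempty W]
    (hpair : ∀ x y, H.Adj x y → ¬ IsTotalDominating H {x, y})
    {S : Set W} (hS : IsTotalDominating H S) : 3 ≤ S.ncard := by
  by_contra! hlt
  obtain ⟨w⟩ := ‹Nonempty W›
  interval_cases h : S.ncard
  · obtain ⟨u, hu, -⟩ := hS w
    exact ((Set.ncard_eq_zero (Set.toFinite S)).mp h ▸ hu : u ∈ (∅ : Set W))
  · obtain ⟨x, rfl⟩ := Set.ncard_eq_one.mp h
    obtain ⟨u, rfl, hxu⟩ := hS x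
    exact H.loopless.irrefl u hxu
  · obtain ⟨x, y, -, rfl⟩ := Set.ncard_eq_two.mp h
    exact hpair x y hS.adj_of_pair hS

end TotalDomination

namespace centralGraph
variable {V : Type*} {G : SimpleGraph V}

lemma not_isTotalDominating_inl_inr (hconn : G.Connected) (h3 : 3 ≤ ENat.card V)
    (u : V) (e : G.edgeSet) :
    ¬ IsTotalDominating (centralGraph G) {Sum.inl u, Sum.inr e} := by
  intro hS
  have hstar : ∀ f : G.edgeSet, u ∈ (f : Sym2 V) := by
    intro f
    obtain ⟨x, hx, hfx⟩ := hS (Sum.inr f)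
    rcases hx with rfl | rfl
    · exact hfx
    · exact hfx.elim
  obtain ⟨w, hw⟩ := Sym2.mem_iff_exists.mp (hstar e)
  obtain ⟨c, hcu, hcw⟩ := ENat.exists_ne_ne_of_three_le h3 u w
  have : Nontrivial V := ⟨⟨c, u, hcu⟩⟩
  obtain ⟨z, hcz⟩ := hconn.preconnected.exists_adj_of_nontrivial c
  have hcu_adj : G.Adj c u := by
    rcases Sym2.mem_iff.mp (hstar ⟨s(c, z), hcz⟩) with rfl | rfl
    exacts [absurd rfl hcu, hcz]
  obtain ⟨x, hx, hcx⟩ := hS (Sum.inl c)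
  rcases hx with rfl | rfl
  · exact hcx.2 hcu_adj
  · have hce : c ∈ s(u, w) := hw ▸ hcx
    rcases Sym2.mem_iff.mp hce with rfl | rfl
    exacts [hcu rfl, hcw rfl]

lemma not_isTotalDominating_inl_inl (hconn : G.Connected) {u v : V} (hnadj : ¬ G.Adj u v) :
    ¬ IsTotalDominating (centralGraph G) {Sum.inl u, Sum.inl v} := by
  intro hS
  have hcover : ∀ x y, G.Adj x y → u ∈ s(x, y) ∨ v ∈ s(x, y) := by
    intro x y hxy
    obtain ⟨w, hw, hew⟩ := hS (Sum.inr ⟨s(x, y), hxy⟩)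
    rcases hw with rfl | rfl
    exacts [Or.inl hew, Or.inr hew]
  -- A walk from `u` to `v` leaves the closed neighbourhood of `u` by an edge ending at `v`.
  have hcommon : ∃ x, G.Adj u x ∧ G.Adj x v := by
    obtain ⟨p⟩ := hconn u v
    obtain ⟨d, -, hfst, hsnd⟩ := p.exists_boundary_dart {x | x = u ∨ G.Adj u x} (Or.inl rfl)
      (by rintro (rfl | h); exacts [hS.adj_of_pair.1 rfl, hnadj h])
    simp only [Set.mem_ofPred_eq, not_or] at hfst hsnd
    rcases hfst with hx | hux
    · exact absurd (hx ▸ d.adj) hsnd.2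
    · refine ⟨d.fst, hux, ?_⟩
      rcases hcover _ _ d.adj with h | h <;> rcases Sym2.mem_iff.mp h with h | h
      · exact absurd (h ▸ hux) (G.loopless.irrefl _)
      · exact absurd h.symm hsnd.1
      · exact absurd (h ▸ hux) hnadj
      · exact h ▸ d.adj
  obtain ⟨x, hux, hxv⟩ := hcommon
  obtain ⟨w, hw, hxw⟩ := hS (Sum.inl x)
  rcases hw with rfl | rfl
  exacts [hxw.2 hux.symm, hxw.2 hxv]

lemma not_isTotalDominating_pair (hconn : G.Connected) (h3 : 3 ≤ ENat.card V)
    (x y : V ⊕ G.edgeSet) (hxy : (centralGraph G).Adj x y) :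
    ¬ IsTotalDominating (centralGraph G) {x, y} := by
  match x, y, hxy with
  | .inl _, .inl _, hxy => exact not_isTotalDominating_inl_inl hconn hxy.2
  | .inl u, .inr e, _ => exact not_isTotalDominating_inl_inr hconn h3 u e
  | .inr e, .inl u, _ => exact Set.pair_comm _ _ ▸ not_isTotalDominating_inl_inr hconn h3 u e

lemma three_le_ncard [Finite V] (hconn : G.Connected) (h3 : 3 ≤ ENat.card V)
    {S : Set (V ⊕ G.edgeSet)} (hS : IsTotalDominating (centralGraph G) S) : 3 ≤ S.ncard :=
  have : Nonempty V := hconn.nonempty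
  hS.three_le_ncard (not_isTotalDominating_pair hconn h3)

end centralGraph

namespace SimpleGraph
variable {V : Type*} {G : SimpleGraph V}

lemma exists_edge_cover_of_isClique (s : Finset V) (hs : G.IsClique (s : Set V))
    (hnbr : ∀ v ∈ s, ∃ w, G.Adj v w) :
    ∃ T : Finset G.edgeSet,
      T.card ≤ (s.card + 1) / 2 ∧ ∀ v ∈ s, ∃ e ∈ T, v ∈ (e : Sym2 V) := by
  classical
  induction s using Finset.strongInduction with
  | H s ih =>
  rcases Nat.lt_or_ge 1 s.card with hlt | hle
  · obtain ⟨x, hx, y, hy, hxy⟩ := Finset.one_lt_card.mp hlt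
    set s' := (s.erase x).erase y
    have hs's : s' ⊂ s := (Finset.erase_ssubset (Finset.mem_erase.mpr ⟨hxy.symm, hy⟩)).trans
      (Finset.erase_ssubset hx)
    have hcard : s'.card + 2 = s.card := by
      rw [Finset.card_erase_of_mem (Finset.mem_erase.mpr ⟨hxy.symm, hy⟩),
        Finset.card_erase_of_mem hx]
      omega
    obtain ⟨T, hTcard, hTcover⟩ := ih s' hs's (hs.subset (by simpa using hs's.subset))
      fun v hv => hnbr v (hs's.subset hv)
    refine ⟨insert ⟨s(x, y), hs hx hy hxy⟩ T, ?_, fun v hv => ?_⟩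
    · have := T.card_insert_le ⟨s(x, y), hs hx hy hxy⟩
      omega
    · by_cases hvxy : v = x ∨ v = y
      · exact ⟨_, Finset.mem_insert_self _ _, Sym2.mem_iff.mpr hvxy⟩
      · obtain ⟨hvx, hvy⟩ := not_or.mp hvxy
        obtain ⟨e, he, hve⟩ := hTcover v (by simp [s', hvx, hvy, hv])
        exact ⟨e, Finset.mem_insert_of_mem he, hve⟩
  · rcases Nat.le_one_iff_eq_zero_or_eq_one.mp hle with h0 | h1
    · exact ⟨∅, by simp, by simp [Finset.card_eq_zero.mp h0]⟩
    · obtain ⟨v, rfl⟩ := Finset.card_eq_one.mp h1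
      obtain ⟨w, hvw⟩ := hnbr v (Finset.mem_singleton_self v)
      exact ⟨{⟨s(v, w), hvw⟩}, by simp, by simp⟩

end SimpleGraph

namespace centralGraph
variable {V : Type*} {G : SimpleGraph V}

lemma isTotalDominating_disjSum (A : Finset V) (T : Finset G.edgeSet)
    (hedge : ∀ e : G.edgeSet, ∃ v ∈ A, v ∈ (e : Sym2 V))
    (hvert : ∀ v, (∃ e ∈ T, v ∈ (e : Sym2 V)) ∨ ∃ w ∈ A, w ≠ v ∧ ¬ G.Adj v w) :
    IsTotalDominating (centralGraph G) (A.disjSum T : Set (V ⊕ G.edgeSet)) := by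
  rintro (v | e)
  · rcases hvert v with ⟨e, he, hve⟩ | ⟨w, hw, hwv, hvw⟩
    · exact ⟨.inr e, by simpa using he, hve⟩
    · exact ⟨.inl w, by simpa using hw, hwv.symm, hvw⟩
  · obtain ⟨v, hv, hve⟩ := hedge e
    exact ⟨.inl v, by simpa using hv, hve⟩

lemma isTotalDominating_erase_disjSum [Fintype V] [DecidableEq V] (v₀ : V) (T : Finset G.edgeSet)
    (hT : ∀ v, ∃ e ∈ T, v ∈ (e : Sym2 V)) :
    IsTotalDominating (centralGraph G)
      ((Finset.univ.erase v₀).disjSum T : Set (V ⊕ G.edgeSet)) := by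
  refine isTotalDominating_disjSum _ _ ?_ fun v => Or.inl (hT v)
  rintro ⟨e, he⟩
  induction e using Sym2.ind with
  | h a b =>
    by_cases ha : a = v₀
    · exact ⟨b, by simpa [ha] using (G.mem_edgeSet.mp he).ne.symm, Sym2.mem_mk_right a b⟩
    · exact ⟨a, by simpa using ha, Sym2.mem_mk_left a b⟩

lemma isTotalDominating_univ_disjSum [Fintype V] (T : Finset G.edgeSet)
    (hT : ∀ v, (∀ w, w ≠ v → G.Adj v w) → ∃ e ∈ T, v ∈ (e : Sym2 V)) :
    IsTotalDominating (centralGraph G)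
      ((Finset.univ : Finset V).disjSum T : Set (V ⊕ G.edgeSet)) := by
  refine isTotalDominating_disjSum _ _ ?_ fun v => ?_
  · rintro ⟨e, he⟩
    induction e using Sym2.ind with
    | h a b => exact ⟨a, Finset.mem_univ a, Sym2.mem_mk_left a b⟩
  · by_cases hv : ∀ w, w ≠ v → G.Adj v w
    · exact Or.inl (hT v hv)
    · push Not at hv
      obtain ⟨w, hwv, hvw⟩ := hv
      exact Or.inr ⟨w, Finset.mem_univ w, hwv, hvw⟩

lemma exists_isTotalDominating_card_le [Fintype V] (h2 : 2 ≤ Fintype.card V) :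
    ∃ S : Finset (V ⊕ G.edgeSet), IsTotalDominating (centralGraph G) S ∧
      S.card ≤ Fintype.card V + (Fintype.card V + 1) / 2 - 1 := by
  classical
  have : Nontrivial V := Fintype.one_lt_card_iff_nontrivial.mp h2
  set U := Finset.univ.filter fun v : V => ∀ w, w ≠ v → G.Adj v w
  have hU : G.IsClique (U : Set V) := fun v hv w _ hvw =>
    (Finset.mem_filter.mp (Finset.mem_coe.mp hv)).2 w hvw.symm
  obtain ⟨T, hTcard, hTcover⟩ := SimpleGraph.exists_edge_cover_of_isClique U hU fun v hv =>
    (exists_ne v).imp (Finset.mem_filter.mp hv).2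
  by_cases hUuniv : U = Finset.univ
  · obtain ⟨v₀⟩ := ‹Nontrivial V›.to_nonempty
    refine ⟨_, isTotalDominating_erase_disjSum v₀ T
      fun v => hTcover v (hUuniv ▸ Finset.mem_univ v), ?_⟩
    rw [hUuniv, Finset.card_univ] at hTcard
    rw [Finset.card_disjSum, Finset.card_erase_of_mem (Finset.mem_univ _), Finset.card_univ]
    omega
  · obtain ⟨a, -, haU⟩ := Finset.exists_mem_notMem_of_card_lt_card
      (Finset.card_lt_card (Finset.ssubset_univ_iff.mpr hUuniv))
    obtain ⟨b, hba, hab⟩ : ∃ b, b ≠ a ∧ ¬ G.Adj a b := by simpa [U] using haU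
    have hbU : b ∉ U := fun hb => hab ((Finset.mem_filter.mp hb).2 a hba.symm).symm
    have hUcard : U.card + 2 ≤ Fintype.card V := by
      have := (insert a (insert b U)).card_le_univ
      rwa [Finset.card_insert_of_notMem (by simp [hba.symm, haU]),
        Finset.card_insert_of_notMem hbU] at this
    refine ⟨_, isTotalDominating_univ_disjSum T
      fun v hv => hTcover v (by simpa [U] using hv), ?_⟩
    rw [Finset.card_disjSum, Finset.card_univ]
    omega

end centralGraph

theorem tdn_central_bounds {V : Type*} [Fintype V] (G : SimpleGraph V) (n : ℕ)
    (hn : Fintype.card V = n) (hn4 : 4 ≤ n) (hconn : G.Connected) :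
    3 ≤ tdn (centralGraph G) ∧ tdn (centralGraph G) ≤ n + (n + 1) / 2 - 1 := by
  have h3 : 3 ≤ ENat.card V := by
    rw [ENat.card_eq_coe_fintype_card, hn]
    exact_mod_cast (by omega : 3 ≤ n)
  obtain ⟨S, hS, hScard⟩ :=
    centralGraph.exists_isTotalDominating_card_le (G := G) (hn ▸ (by omega : 2 ≤ n))
  refine ⟨le_tdn ⟨_, hS⟩ fun T hT => centralGraph.three_le_ncard hconn h3 hT, ?_⟩
  calc tdn (centralGraph G) ≤ (S : Set (V ⊕ G.edgeSet)).ncard := tdn_le_ncard hS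
    _ = S.card := Set.ncard_coe_finset S
    _ ≤ n + (n + 1) / 2 - 1 := hn ▸ hScard
end

section
/- There is no connected graph G of order n ≥ 2 with χ_d^t(C(G)) = 3. -/
open SimpleGraph

section helpers
variable {V : Type*}

lemma my_exists_ne2 [Fintype V] (h : 3 ≤ Fintype.card V) (a b : V) :
    ∃ c : V, c ≠ a ∧ c ≠ b := by
  classical
  by_contra hc
  push_neg at hc
  have hsub : (Finset.univ : Finset V) ⊆ {a, b} := by
    intro x _
    by_cases hx : x = a
    · simp [hx]
    · simp [hc x hx]
  have := Finset.card_le_card hsub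
  have h2 : ({a, b} : Finset V).card ≤ 2 := by
    apply le_trans (Finset.card_insert_le _ _); simp
  rw [Finset.card_univ] at this; omega

lemma my_walk_closed {G : SimpleGraph V} {C : Set V}
    (hC : ∀ a b, a ∈ C → G.Adj a b → b ∈ C) {x y : V} (p : G.Walk x y) :
    x ∈ C → y ∈ C := by
  induction p with
  | nil => exact id
  | cons h p ih => exact fun hx => ih (hC _ _ hx h)

lemma my_reach_closed {G : SimpleGraph V} {C : Set V}
    (hC : ∀ a b, a ∈ C → G.Adj a b → b ∈ C) {x y : V} (h : G.Reachable x y)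
    (hx : x ∈ C) : y ∈ C := by
  obtain ⟨p⟩ := h
  exact my_walk_closed hC p hx

lemma my_exists_adj [Fintype V] {G : SimpleGraph V} (hconn : G.Connected)
    (h : 2 ≤ Fintype.card V) (v : V) : ∃ w, G.Adj v w := by
  obtain ⟨w, hw⟩ := Fintype.exists_ne_of_one_lt_card (by omega) v
  obtain ⟨p⟩ := hconn.preconnected v w
  cases p with
  | nil => exact absurd rfl hw
  | cons h _ => exact ⟨_, h⟩

lemma my_sym2_eq {z z' : V} (hne : z ≠ z') {s : Sym2 V} (h1 : z ∈ s) (h2 : z' ∈ s) :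
    s = s(z, z') := by
  induction s using Sym2.ind with
  | _ u v =>
    rw [Sym2.mem_iff] at h1 h2
    obtain rfl | rfl := h1 <;> obtain rfl | rfl := h2 <;>
      first | exact (hne rfl).elim | rfl | exact Sym2.eq_swap

/-- Case A: a single color class dominates every subdivision vertex. -/
lemma lemA [Fintype V] {G : SimpleGraph V} (hcard : 3 ≤ Fintype.card V)
    (hconn : G.Connected) {f : V ⊕ G.edgeSet → ℕ}
    (hprop : ∀ u v, (centralGraph G).Adj u v → f u ≠ f v)
    (hdom : ∀ v, ∃ c, (∃ w, f w = c) ∧ ∀ w, f w = c → (centralGraph G).Adj v w)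
    (hlt : ∀ v, f v < 3) {d : ℕ} {z : V} (hz : f (Sum.inl z) = d)
    (hD : ∀ e : G.edgeSet, ∀ w, f w = d → ∃ x, w = Sum.inl x ∧ x ∈ (e : Sym2 V)) :
    False := by
  have hadj : ∀ v : V, ∃ w, G.Adj v w := my_exists_adj hconn (by omega)
  have hzmem : ∀ e : G.edgeSet, z ∈ (e : Sym2 V) := by
    intro e
    obtain ⟨x, hx, hxm⟩ := hD e _ hz
    injection hx with hx'
    exact hx' ▸ hxm
  have hex : ∃ x y : V, x ≠ y ∧ x ≠ z ∧ y ≠ z := by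
    obtain ⟨x, hx⟩ := Fintype.exists_ne_of_one_lt_card (by omega : 1 < Fintype.card V) z
    obtain ⟨y, hy1, hy2⟩ := my_exists_ne2 hcard x z
    exact ⟨x, y, fun h => hy1 h.symm, hx, hy2⟩
  obtain ⟨x, y, hxy, hxz, hyz⟩ := hex
  have hxzadj : G.Adj x z := by
    obtain ⟨t, ht⟩ := hadj x
    have := hzmem ⟨s(x, t), G.mem_edgeSet.mpr ht⟩
    rcases Sym2.mem_iff.mp this with h | h
    · exact absurd h.symm hxz
    · exact h ▸ ht
  have hyzadj : G.Adj y z := by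
    obtain ⟨t, ht⟩ := hadj y
    have := hzmem ⟨s(y, t), G.mem_edgeSet.mpr ht⟩
    rcases Sym2.mem_iff.mp this with h | h
    · exact absurd h.symm hyz
    · exact h ▸ ht
  have hnxy : ¬ G.Adj x y := by
    intro h
    have := hzmem ⟨s(x, y), G.mem_edgeSet.mpr h⟩
    rcases Sym2.mem_iff.mp this with h' | h'
    · exact hxz h'.symm
    · exact hyz h'.symm
  have hfxy : f (Sum.inl x) ≠ f (Sum.inl y) := hprop _ _ ⟨hxy, hnxy⟩
  have hfxd : f (Sum.inl x) ≠ d := by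
    intro h
    obtain ⟨t, ht, htm⟩ := hD ⟨s(y, z), G.mem_edgeSet.mpr hyzadj⟩ _ h
    injection ht with ht'
    subst ht'
    rcases Sym2.mem_iff.mp htm with h' | h'
    · exact hxy h'
    · exact hxz h'
  have hfyd : f (Sum.inl y) ≠ d := by
    intro h
    obtain ⟨t, ht, htm⟩ := hD ⟨s(x, z), G.mem_edgeSet.mpr hxzadj⟩ _ h
    injection ht with ht'
    subst ht'
    rcases Sym2.mem_iff.mp htm with h' | h'
    · exact hxy h'.symm
    · exact hyz h'
  obtain ⟨c, ⟨w, hw⟩, hall⟩ := hdom (Sum.inl z)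
  have h1 : c ≠ d := by
    intro h
    exact (centralGraph G).loopless.irrefl _ (hall _ (h ▸ hz))
  have h2 : c ≠ f (Sum.inl x) := by
    intro h
    exact (hall _ h.symm).2 hxzadj.symm
  have h3 : c ≠ f (Sum.inl y) := by
    intro h
    exact (hall _ h.symm).2 hyzadj.symm
  have := hlt w
  have := hlt (Sum.inl x)
  have := hlt (Sum.inl y)
  have := hlt (Sum.inl z)
  rw [hw] at *
  rw [hz] at *
  omega

end helpers

section more
variable {V : Type*}

/-- Case D: two disjoint 2-element classes dominate all subdivision vertices. -/
lemma lemD {G : SimpleGraph V} (hconn : G.Connected) {z1 z1' z2 z2' : V}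
    (h12 : z1 ≠ z2) (h12' : z1 ≠ z2') (h1'2 : z1' ≠ z2) (h1'2' : z1' ≠ z2')
    (H : ∀ e : G.edgeSet, (e : Sym2 V) = s(z1, z1') ∨ (e : Sym2 V) = s(z2, z2')) :
    False := by
  have hclosed : ∀ a t, a ∈ ({z1, z1'} : Set V) → G.Adj a t → t ∈ ({z1, z1'} : Set V) := by
    intro a t haC hat
    rcases H ⟨s(a, t), G.mem_edgeSet.mpr hat⟩ with heq | heq
    · have : t ∈ s(z1, z1') := heq ▸ (Sym2.mem_mk_right a t)
      rcases Sym2.mem_iff.mp this with rfl | rfl <;> simp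
    · have : a ∈ s(z2, z2') := heq ▸ (Sym2.mem_mk_left a t)
      rcases Sym2.mem_iff.mp this with rfl | rfl <;>
        rcases haC with rfl | rfl <;> simp_all
  have := my_reach_closed hclosed (hconn.preconnected z1 z2) (by simp)
  rcases this with h | h
  · exact h12 h.symm
  · exact h1'2 h.symm

/-- Mixed case: one singleton class and one 2-element class dominate all
subdivision vertices. -/
lemma lemMixed {G : SimpleGraph V} (hconn : G.Connected)
    {f : V ⊕ G.edgeSet → ℕ}
    (hdom : ∀ v, ∃ c, (∃ w, f w = c) ∧ ∀ w, f w = c → (centralGraph G).Adj v w)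
    (hlt : ∀ v, f v < 3) {ca cb : ℕ} (hab : ca ≠ cb) {za zb zb' : V}
    (hza : f (Sum.inl za) = ca)
    (hKa : ∀ w, f w = ca → w = Sum.inl za)
    (hzb : f (Sum.inl zb) = cb) (hzb' : f (Sum.inl zb') = cb)
    (hKb : ∀ w, f w = cb → w = Sum.inl zb ∨ w = Sum.inl zb')
    (hbb : zb ≠ zb') {eb : G.edgeSet} (heb : (eb : Sym2 V) = s(zb, zb'))
    (H : ∀ e : G.edgeSet, za ∈ (e : Sym2 V) ∨ (e : Sym2 V) = s(zb, zb')) : False := by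
  have hzazb : za ≠ zb := by
    intro h; rw [h, hzb] at hza; exact hab hza.symm
  have hzazb' : za ≠ zb' := by
    intro h; rw [h, hzb'] at hza; exact hab hza.symm
  obtain ⟨c, ⟨w, hw⟩, hall⟩ := hdom (Sum.inl za)
  have hcne : c ≠ ca := by
    intro h
    exact (centralGraph G).loopless.irrefl _ (hall _ (by rw [hza, h]))
  by_cases hccb : c = cb
  · have h1 := hall _ (by rw [hzb, hccb])
    have h2 := hall _ (by rw [hzb', hccb])
    -- h1 : Adj (inl za) (inl zb) etc.
    have hn1 : ¬ G.Adj za zb := h1.2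
    have hn2 : ¬ G.Adj za zb' := h2.2
    have hclosed : ∀ a t, a ∈ ({zb, zb'} : Set V) → G.Adj a t →
        t ∈ ({zb, zb'} : Set V) := by
      intro a t haC hat
      rcases H ⟨s(a, t), G.mem_edgeSet.mpr hat⟩ with hmem | heq
      · rcases Sym2.mem_iff.mp hmem with rfl | rfl
        · rcases haC with rfl | rfl
          · exact (hzazb rfl).elim
          · exact (hzazb' rfl).elim
        · rcases haC with rfl | rfl
          · exact (hn1 hat.symm).elim
          · exact (hn2 hat.symm).elim
      · have : t ∈ s(zb, zb') := heq ▸ (Sym2.mem_mk_right a t)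
        rcases Sym2.mem_iff.mp this with rfl | rfl <;> simp
    have := my_reach_closed hclosed (hconn.preconnected zb za) (by simp)
    rcases this with h | h
    · exact hzazb h
    · exact hzazb' h
  · have hfb : f (Sum.inr eb) = c := by
      have h1 : f (Sum.inr eb) ≠ ca := by
        intro h; exact absurd (hKa _ h) (by simp)
      have h2 : f (Sum.inr eb) ≠ cb := by
        intro h; rcases hKb _ h with h' | h' <;> simp at h'
      have := hlt (Sum.inr eb)
      have := hlt w
      have := hlt (Sum.inl za)
      have := hlt (Sum.inl zb)
      rw [hw] at *
      rw [hza] at *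
      rw [hzb] at *
      omega
    have := hall _ hfb
    -- Adj (inl za) (inr eb) : za ∈ eb
    rw [show ((centralGraph G).Adj (Sum.inl za) (Sum.inr eb)) = (za ∈ (eb : Sym2 V)) from rfl, heb] at this
    rcases Sym2.mem_iff.mp this with h | h
    · exact hzazb h
    · exact hzazb' h

end more

section ss
variable {V : Type*}

/-- Case of two singleton dominating classes. -/
lemma lemSS [Fintype V] {G : SimpleGraph V} (hcard : 3 ≤ Fintype.card V)
    (hconn : G.Connected) {f : V ⊕ G.edgeSet → ℕ}
    (hprop : ∀ u v, (centralGraph G).Adj u v → f u ≠ f v)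
    (hdom : ∀ v, ∃ c, (∃ w, f w = c) ∧ ∀ w, f w = c → (centralGraph G).Adj v w)
    (hlt : ∀ v, f v < 3) {c1 c2 : ℕ} (h12 : c1 ≠ c2) {z1 z2 : V}
    (hz1 : f (Sum.inl z1) = c1) (hz2 : f (Sum.inl z2) = c2)
    (hs1 : ∀ w, f w = c1 → w = Sum.inl z1) (hs2 : ∀ w, f w = c2 → w = Sum.inl z2)
    (H : ∀ e : G.edgeSet, z1 ∈ (e : Sym2 V) ∨ z2 ∈ (e : Sym2 V)) : False := by
  have hz12 : z1 ≠ z2 := by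
    intro h; rw [h, hz2] at hz1; exact h12 hz1.symm
  have hadj : ∀ v : V, ∃ w, G.Adj v w := my_exists_adj hconn (by omega)
  have hout : ∀ x : V, x ≠ z1 → x ≠ z2 →
      f (Sum.inl x) ≠ c1 ∧ f (Sum.inl x) ≠ c2 := by
    intro x hx1 hx2
    constructor
    · intro h; injection hs1 _ h with h'; exact hx1 h'
    · intro h; injection hs2 _ h with h'; exact hx2 h'
  have key1 : ∀ x y : V, x ≠ z1 → x ≠ z2 → y ≠ z1 → y ≠ z2 → x = y := by
    intro x y hx1 hx2 hy1 hy2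
    by_contra hxy
    obtain ⟨hfx1, hfx2⟩ := hout x hx1 hx2
    obtain ⟨hfy1, hfy2⟩ := hout y hy1 hy2
    have hGxy : G.Adj x y := by
      by_contra hng
      have hfeq : f (Sum.inl x) = f (Sum.inl y) := by
        have := hlt (Sum.inl x); have := hlt (Sum.inl y)
        have := hlt (Sum.inl z1); have := hlt (Sum.inl z2)
        rw [hz1] at *; rw [hz2] at *
        omega
      exact hprop (Sum.inl x) (Sum.inl y) ⟨hxy, hng⟩ hfeq
    rcases H ⟨s(x, y), G.mem_edgeSet.mpr hGxy⟩ with h | h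
    · rcases Sym2.mem_iff.mp h with h' | h'
      · exact hx1 h'.symm
      · exact hy1 h'.symm
    · rcases Sym2.mem_iff.mp h with h' | h'
      · exact hx2 h'.symm
      · exact hy2 h'.symm
  obtain ⟨x, hx1, hx2⟩ := my_exists_ne2 hcard z1 z2
  obtain ⟨hfx1, hfx2⟩ := hout x hx1 hx2
  obtain ⟨tx, htx⟩ := hadj x
  set ex : G.edgeSet := ⟨s(x, tx), G.mem_edgeSet.mpr htx⟩ with hex
  have hfex : f (Sum.inr ex) ≠ c1 ∧ f (Sum.inr ex) ≠ c2 := by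
    constructor
    · intro h; exact absurd (hs1 _ h) (by simp)
    · intro h; exact absurd (hs2 _ h) (by simp)
  obtain ⟨c, ⟨w, hw⟩, hallx⟩ := hdom (Sum.inl x)
  have hcx : c ≠ f (Sum.inl x) := by
    intro h
    exact (centralGraph G).loopless.irrefl _ (hallx _ h.symm)
  have hc12 : c = c1 ∨ c = c2 := by
    have := hlt w; have := hlt (Sum.inl x)
    have := hlt (Sum.inl z1); have := hlt (Sum.inl z2)
    rw [hw] at *; rw [hz1] at *; rw [hz2] at *
    omega
  rcases hc12 with hcc | hcc
  · -- dominating class of x is {z1} : ¬ G.Adj x z1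
    have hnx1 : ¬ G.Adj x z1 :=
      (hallx (Sum.inl z1) (by rw [hz1, hcc])).2
    -- domination of z1
    obtain ⟨c', ⟨w', hw'⟩, hallz⟩ := hdom (Sum.inl z1)
    have hc'1 : c' ≠ c1 := by
      intro h
      exact (centralGraph G).loopless.irrefl _ (hallz (Sum.inl z1) (by rw [hz1, h]))
    by_cases hc'2 : c' = c2
    · have hn12 : ¬ G.Adj z1 z2 := (hallz (Sum.inl z2) (by rw [hz2, hc'2])).2
      obtain ⟨t, ht⟩ := hadj z1
      have ht1 : t ≠ z1 := fun h => G.loopless.irrefl z1 (h ▸ ht)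
      have ht2 : t ≠ z2 := fun h => hn12 (h ▸ ht)
      have : t = x := key1 t x ht1 ht2 hx1 hx2
      exact hnx1 (this ▸ ht).symm
    · -- c' is the third color; the subdivision vertex of ex has color c'
      have hfex' : f (Sum.inr ex) = c' := by
        have := hlt (Sum.inr ex); have := hlt w'
        have := hlt (Sum.inl z1); have := hlt (Sum.inl z2)
        rw [hw'] at *; rw [hz1] at *; rw [hz2] at *
        omega
      have := hallz (Sum.inr ex) hfex'
      rw [show ((centralGraph G).Adj (Sum.inl z1) (Sum.inr ex)) =
        (z1 ∈ (ex : Sym2 V)) from rfl] at this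
      rcases Sym2.mem_iff.mp this with h | h
      · exact hx1 h.symm
      · exact hnx1 (h ▸ htx)
  · -- dominating class of x is {z2} : ¬ G.Adj x z2
    have hnx2 : ¬ G.Adj x z2 :=
      (hallx (Sum.inl z2) (by rw [hz2, hcc])).2
    obtain ⟨c', ⟨w', hw'⟩, hallz⟩ := hdom (Sum.inl z2)
    have hc'2 : c' ≠ c2 := by
      intro h
      exact (centralGraph G).loopless.irrefl _ (hallz (Sum.inl z2) (by rw [hz2, h]))
    by_cases hc'1 : c' = c1
    · have hn12 : ¬ G.Adj z2 z1 := (hallz (Sum.inl z1) (by rw [hz1, hc'1])).2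
      obtain ⟨t, ht⟩ := hadj z2
      have ht2 : t ≠ z2 := fun h => G.loopless.irrefl z2 (h ▸ ht)
      have ht1 : t ≠ z1 := fun h => hn12 (h ▸ ht)
      have : t = x := key1 t x ht1 ht2 hx1 hx2
      exact hnx2 (this ▸ ht).symm
    · have hfex' : f (Sum.inr ex) = c' := by
        have := hlt (Sum.inr ex); have := hlt w'
        have := hlt (Sum.inl z1); have := hlt (Sum.inl z2)
        rw [hw'] at *; rw [hz1] at *; rw [hz2] at *
        omega
      have := hallz (Sum.inr ex) hfex'
      rw [show ((centralGraph G).Adj (Sum.inl z2) (Sum.inr ex)) =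
        (z2 ∈ (ex : Sym2 V)) from rfl] at this
      rcases Sym2.mem_iff.mp this with h | h
      · exact hx2 h.symm
      · exact hnx2 (h ▸ htx)

end ss

section extra
variable {V : Type*}

lemma my_eq_of_card_le_two [Fintype V] (h : Fintype.card V ≤ 2) (a b c : V)
    (hab : a ≠ b) (hac : a ≠ c) : b = c := by
  classical
  by_contra hbc
  have h3 : ({a, b, c} : Finset V).card = 3 := by
    rw [Finset.card_insert_of_notMem (by simp [hab, hac]),
        Finset.card_insert_of_notMem (by simp [hbc]), Finset.card_singleton]
  have := Finset.card_le_card (Finset.subset_univ ({a, b, c} : Finset V))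
  rw [Finset.card_univ] at this; omega

end extra


theorem no_tdcn_central_eq_three {V : Type*} [Fintype V] (G : SimpleGraph V)
    (hn : 2 ≤ Fintype.card V) (hconn : G.Connected) :
    tdcn (centralGraph G) ≠ 3 := by
  classical
  intro h3
  unfold tdcn at h3
  set S := {k | ∃ f : (V ⊕ G.edgeSet) → ℕ,
    IsTDColoring (centralGraph G) f ∧ ∀ v, f v < k} with hS
  have hne : S.Nonempty := by
    by_contra hemp
    rw [Set.not_nonempty_iff_eq_empty] at hemp
    rw [hemp, Nat.sInf_empty] at h3
    omega
  have hmem : 3 ∈ S := h3 ▸ Nat.sInf_mem hne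
  obtain ⟨f, ⟨hprop, hdom⟩, hlt⟩ := hmem
  rcases lt_or_ge (Fintype.card V) 3 with hc2 | hc3
  · -- |V| = 2 : exhibit a 2-coloring, contradicting sInf = 3
    have hcle : Fintype.card V ≤ 2 := by omega
    have hadjall : ∀ u v : V, u ≠ v → G.Adj u v := by
      intro u v huv
      obtain ⟨t, ht⟩ := my_exists_adj hconn hn u
      have : t = v := my_eq_of_card_le_two hcle u t v ht.ne huv
      exact this ▸ ht
    have hvmem : ∀ (v : V) (e : G.edgeSet), v ∈ (e : Sym2 V) := by
      intro v e
      obtain ⟨s, hs⟩ := e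
      revert hs
      induction s using Sym2.ind with
      | _ a b =>
        intro hs
        have hab : a ≠ b := (G.mem_edgeSet.mp hs).ne
        show v ∈ s(a, b)
        rw [Sym2.mem_iff]
        by_cases hva : v = a
        · exact Or.inl hva
        · exact Or.inr (my_eq_of_card_le_two hcle a b v hab
            (fun h => hva h.symm)).symm
    have h2S : 2 ∈ S := by
      refine ⟨Sum.elim (fun _ => 1) (fun _ => 0), ⟨?_, ?_⟩, ?_⟩
      · rintro (u | e) (v | e') hadj
        · exact absurd (hadjall u v hadj.1) hadj.2
        · simp
        · simp
        · exact hadj.elim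
      · rintro (v | e)
        · obtain ⟨t, ht⟩ := my_exists_adj hconn hn v
          refine ⟨0, ⟨Sum.inr ⟨s(v, t), G.mem_edgeSet.mpr ht⟩, rfl⟩, ?_⟩
          rintro (u | e') hu
          · simp at hu
          · exact hvmem v e'
        · have : Nonempty V := Fintype.card_pos_iff.mp (by omega)
          obtain ⟨v0⟩ := this
          refine ⟨1, ⟨Sum.inl v0, rfl⟩, ?_⟩
          rintro (u | e') hu
          · exact hvmem u e
          · simp at hu
      · rintro (v | e) <;> simp
    have := Nat.sInf_le h2S
    omega
  · -- |V| ≥ 3 : no 3-coloring can be a TD coloring of the central graph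
    have hadjV : ∀ v : V, ∃ w, G.Adj v w := my_exists_adj hconn hn
    obtain ⟨v0⟩ : Nonempty V := Fintype.card_pos_iff.mp (by omega)
    obtain ⟨w0, h0⟩ := hadjV v0
    set e0 : G.edgeSet := ⟨s(v0, w0), G.mem_edgeSet.mpr h0⟩ with he0
    have Hdom : ∀ e : G.edgeSet, ∃ c, (∃ w, f w = c) ∧
        ∀ w, f w = c → ∃ x, w = Sum.inl x ∧ x ∈ (e : Sym2 V) := by
      intro e
      obtain ⟨c, hcne, hcall⟩ := hdom (Sum.inr e)
      refine ⟨c, hcne, fun w hw => ?_⟩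
      have h := hcall w hw
      cases w with
      | inl x => exact ⟨x, rfl, h⟩
      | inr e' => exact h.elim
    have hnotb : ∀ (c : ℕ) (e : G.edgeSet),
        (∀ w, f w = c → ∃ x, w = Sum.inl x ∧ x ∈ (e : Sym2 V)) →
        c ≠ f (Sum.inr e0) := by
      intro c e hc h
      obtain ⟨x, hx, -⟩ := hc (Sum.inr e0) h.symm
      exact absurd hx (by simp)
    obtain ⟨c1, hc1ne, hc1all⟩ := Hdom e0
    by_cases hA1 : ∀ e : G.edgeSet, ∀ w, f w = c1 →
        ∃ x, w = Sum.inl x ∧ x ∈ (e : Sym2 V)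
    · obtain ⟨w1, hw1⟩ := hc1ne
      obtain ⟨z, hz, -⟩ := hc1all w1 hw1
      subst hz
      exact lemA hc3 hconn hprop hdom hlt hw1 hA1
    obtain ⟨e2, he2⟩ := not_forall.mp hA1
    obtain ⟨c2, hc2ne, hc2all⟩ := Hdom e2
    have hc12 : c1 ≠ c2 := fun h => he2 (h ▸ hc2all)
    by_cases hA2 : ∀ e : G.edgeSet, ∀ w, f w = c2 →
        ∃ x, w = Sum.inl x ∧ x ∈ (e : Sym2 V)
    · obtain ⟨w2, hw2⟩ := hc2ne
      obtain ⟨z, hz, -⟩ := hc2all w2 hw2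
      subst hz
      exact lemA hc3 hconn hprop hdom hlt hw2 hA2
    obtain ⟨e1, he1⟩ := not_forall.mp hA2
    obtain ⟨c, hcne, hcall⟩ := Hdom e1
    have hcc1 : c = c1 := by
      have h1 : c1 ≠ f (Sum.inr e0) := hnotb c1 e0 hc1all
      have h2 : c2 ≠ f (Sum.inr e0) := hnotb c2 e2 hc2all
      have h3' : c ≠ f (Sum.inr e0) := hnotb c e1 hcall
      have h4 : c ≠ c2 := fun h => he1 (h ▸ hcall)
      obtain ⟨wa, hwa⟩ := hc1ne
      obtain ⟨wb, hwb⟩ := hc2ne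
      obtain ⟨wc, hwc⟩ := hcne
      have := hlt wa; have := hlt wb; have := hlt wc; have := hlt (Sum.inr e0)
      rw [hwa] at *; rw [hwb] at *; rw [hwc] at *
      omega
    have hc1alle1 : ∀ w, f w = c1 → ∃ x, w = Sum.inl x ∧ x ∈ (e1 : Sym2 V) :=
      hcc1 ▸ hcall
    have H : ∀ e : G.edgeSet,
        (∀ w, f w = c1 → ∃ x, w = Sum.inl x ∧ x ∈ (e : Sym2 V)) ∨
        (∀ w, f w = c2 → ∃ x, w = Sum.inl x ∧ x ∈ (e : Sym2 V)) := by
      intro e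
      obtain ⟨c', hc'ne, hc'all⟩ := Hdom e
      have h1 : c1 ≠ f (Sum.inr e0) := hnotb c1 e0 hc1all
      have h2 : c2 ≠ f (Sum.inr e0) := hnotb c2 e2 hc2all
      have h3' : c' ≠ f (Sum.inr e0) := hnotb c' e hc'all
      have hor : c' = c1 ∨ c' = c2 := by
        obtain ⟨wa, hwa⟩ := hc1ne
        obtain ⟨wb, hwb⟩ := hc2ne
        obtain ⟨wc, hwc⟩ := hc'ne
        have := hlt wa; have := hlt wb; have := hlt wc; have := hlt (Sum.inr e0)
        rw [hwa] at *; rw [hwb] at *; rw [hwc] at *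
        omega
      rcases hor with h | h
      · exact Or.inl (h ▸ hc'all)
      · exact Or.inr (h ▸ hc'all)
    obtain ⟨w1, hw1⟩ := hc1ne
    obtain ⟨z1, hzeq, hz1e1⟩ := hc1alle1 w1 hw1
    subst hzeq
    obtain ⟨w2, hw2⟩ := hc2ne
    obtain ⟨z2, hzeq2, hz2e2⟩ := hc2all w2 hw2
    subst hzeq2
    have memc1 : ∀ (e : G.edgeSet),
        (∀ w, f w = c1 → ∃ x, w = Sum.inl x ∧ x ∈ (e : Sym2 V)) →
        z1 ∈ (e : Sym2 V) := by
      intro e h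
      obtain ⟨x, hx, hxm⟩ := h _ hw1
      injection hx with hx'
      subst hx'
      exact hxm
    have memc2 : ∀ (e : G.edgeSet),
        (∀ w, f w = c2 → ∃ x, w = Sum.inl x ∧ x ∈ (e : Sym2 V)) →
        z2 ∈ (e : Sym2 V) := by
      intro e h
      obtain ⟨x, hx, hxm⟩ := h _ hw2
      injection hx with hx'
      subst hx'
      exact hxm
    by_cases hs1 : ∀ w, f w = c1 → w = Sum.inl z1
    · by_cases hs2 : ∀ w, f w = c2 → w = Sum.inl z2
      · refine lemSS hc3 hconn hprop hdom hlt hc12 hw1 hw2 hs1 hs2 ?_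
        intro e
        exact (H e).imp (memc1 e) (memc2 e)
      · -- class c2 has a second element
        obtain ⟨w', hw'c, hw'ne⟩ : ∃ w, f w = c2 ∧ w ≠ Sum.inl z2 := by
          by_contra hcon
          push_neg at hcon
          exact hs2 (fun w hw => hcon w hw)
        obtain ⟨z2', hz2'eq, hz2'e2⟩ := hc2all w' hw'c
        subst hz2'eq
        have hne22 : z2 ≠ z2' := fun h => hw'ne (by rw [h])
        have hKb : ∀ w, f w = c2 → w = Sum.inl z2 ∨ w = Sum.inl z2' := by
          intro w hw
          obtain ⟨x, hx, hxm⟩ := hc2all w hw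
          rw [my_sym2_eq hne22 hz2e2 hz2'e2, Sym2.mem_iff] at hxm
          rcases hxm with rfl | rfl
          · exact Or.inl hx
          · exact Or.inr hx
        refine lemMixed hconn hdom hlt hc12 hw1 hs1 hw2 hw'c hKb hne22
          (my_sym2_eq hne22 hz2e2 hz2'e2) ?_
        intro e
        rcases H e with h | h
        · exact Or.inl (memc1 e h)
        · refine Or.inr (my_sym2_eq hne22 (memc2 e h) ?_)
          obtain ⟨x, hx, hxm⟩ := h _ hw'c
          injection hx with hx'
          subst hx'
          exact hxm
    · -- class c1 has a second element
      obtain ⟨w', hw'c, hw'ne⟩ : ∃ w, f w = c1 ∧ w ≠ Sum.inl z1 := by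
        by_contra hcon
        push_neg at hcon
        exact hs1 (fun w hw => hcon w hw)
      obtain ⟨z1', hz1'eq, hz1'e1⟩ := hc1alle1 w' hw'c
      subst hz1'eq
      have hne11 : z1 ≠ z1' := fun h => hw'ne (by rw [h])
      have memc1' : ∀ (e : G.edgeSet),
          (∀ w, f w = c1 → ∃ x, w = Sum.inl x ∧ x ∈ (e : Sym2 V)) →
          z1' ∈ (e : Sym2 V) := by
        intro e h
        obtain ⟨x, hx, hxm⟩ := h _ hw'c
        injection hx with hx'
        subst hx'
        exact hxm
      by_cases hs2 : ∀ w, f w = c2 → w = Sum.inl z2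
      · have hKb : ∀ w, f w = c1 → w = Sum.inl z1 ∨ w = Sum.inl z1' := by
          intro w hw
          obtain ⟨x, hx, hxm⟩ := hc1alle1 w hw
          rw [my_sym2_eq hne11 hz1e1 hz1'e1, Sym2.mem_iff] at hxm
          rcases hxm with rfl | rfl
          · exact Or.inl hx
          · exact Or.inr hx
        refine lemMixed hconn hdom hlt (Ne.symm hc12) hw2 hs2 hw1 hw'c hKb hne11
          (my_sym2_eq hne11 hz1e1 hz1'e1) ?_
        intro e
        rcases H e with h | h
        · exact Or.inr (my_sym2_eq hne11 (memc1 e h) (memc1' e h))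
        · exact Or.inl (memc2 e h)
      · -- both classes have 2 elements
        obtain ⟨w'', hw''c, hw''ne⟩ : ∃ w, f w = c2 ∧ w ≠ Sum.inl z2 := by
          by_contra hcon
          push_neg at hcon
          exact hs2 (fun w hw => hcon w hw)
        obtain ⟨z2', hz2'eq, hz2'e2⟩ := hc2all w'' hw''c
        subst hz2'eq
        have hne22 : z2 ≠ z2' := fun h => hw''ne (by rw [h])
        have memc2' : ∀ (e : G.edgeSet),
            (∀ w, f w = c2 → ∃ x, w = Sum.inl x ∧ x ∈ (e : Sym2 V)) →
            z2' ∈ (e : Sym2 V) := by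
          intro e h
          obtain ⟨x, hx, hxm⟩ := h _ hw''c
          injection hx with hx'
          subst hx'
          exact hxm
        have hd : ∀ a : V, f (Sum.inl a) = c1 → ∀ b : V, f (Sum.inl b) = c2 →
            a ≠ b := by
          intro a ha b hb h
          rw [h, hb] at ha
          exact hc12 ha.symm
        exact lemD hconn (hd z1 hw1 z2 hw2) (hd z1 hw1 z2' hw''c)
          (hd z1' hw'c z2 hw2) (hd z1' hw'c z2' hw''c)
          (fun e => (H e).imp
            (fun h => my_sym2_eq hne11 (memc1 e h) (memc1' e h))
            (fun h => my_sym2_eq hne22 (memc2 e h) (memc2' e h)))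
end

section
/- For the path P_n on n ≥ 2 vertices, χ_d^t(C(P_n)) = ⌊2n/3⌋ + 2 if n ≡ 1 (mod 3) or n ∈ {3, 5}, and χ_d^t(C(P_n)) = ⌊2n/3⌋ + 1 otherwise. -/
open SimpleGraph

namespace TDCaux
open Finset

lemma path_adj {n : ℕ} (u v : Fin n) :
    (pathG n).Adj u v ↔ u ≠ v ∧ ((u:ℕ)+1 = v ∨ (v:ℕ)+1 = u) := by
  simp [pathG, SimpleGraph.fromRel_adj]

def pedge (n j : ℕ) (h : j + 1 < n) : (pathG n).edgeSet :=
  ⟨s(⟨j, Nat.lt_of_succ_lt h⟩, ⟨j+1, h⟩), by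
    rw [SimpleGraph.mem_edgeSet, path_adj]
    exact ⟨by simp [Fin.ext_iff], Or.inl rfl⟩⟩

lemma mem_pedge {n j : ℕ} (h : j + 1 < n) (u : Fin n) :
    u ∈ ((pedge n j h : (pathG n).edgeSet) : Sym2 (Fin n)) ↔ (u:ℕ) = j ∨ (u:ℕ) = j+1 := by
  simp [pedge, Sym2.mem_iff, Fin.ext_iff]

lemma edge_eq_pedge {n : ℕ} (e : (pathG n).edgeSet) :
    ∃ (j : ℕ) (h : j + 1 < n), e = pedge n j h := by
  obtain ⟨e, he⟩ := e
  induction e with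
  | _ u v =>
    rw [SimpleGraph.mem_edgeSet, path_adj] at he
    obtain ⟨hne, h | h⟩ := he
    · exact ⟨u, h ▸ v.isLt, by simp [pedge, Subtype.ext_iff, Sym2.eq_iff, Fin.ext_iff, h]⟩
    · refine ⟨v, h ▸ u.isLt, ?_⟩
      simp [pedge, Subtype.ext_iff, Sym2.eq_iff, Fin.ext_iff, h]

lemma cadj_inl_inl {n : ℕ} (u v : Fin n) :
    (centralGraph (pathG n)).Adj (Sum.inl u) (Sum.inl v) ↔
      (u:ℕ) ≠ v ∧ (u:ℕ)+1 ≠ v ∧ (v:ℕ)+1 ≠ u := by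
  show (u ≠ v ∧ ¬ (pathG n).Adj u v) ↔ _
  rw [path_adj, Fin.ne_iff_vne]
  tauto

lemma cadj_inl_inr {n : ℕ} (u : Fin n) (e : (pathG n).edgeSet) :
    (centralGraph (pathG n)).Adj (Sum.inl u) (Sum.inr e) ↔ u ∈ (e : Sym2 (Fin n)) :=
  Iff.rfl

lemma cadj_inr_inl {n : ℕ} (u : Fin n) (e : (pathG n).edgeSet) :
    (centralGraph (pathG n)).Adj (Sum.inr e) (Sum.inl u) ↔ u ∈ (e : Sym2 (Fin n)) :=
  Iff.rfl

lemma cadj_inr_inr {n : ℕ} (e e' : (pathG n).edgeSet) :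
    ¬ (centralGraph (pathG n)).Adj (Sum.inr e) (Sum.inr e') := fun h => h

instance pathAdjDec (n : ℕ) : DecidableRel (pathG n).Adj :=
  fun a b => decidable_of_iff _ (path_adj a b).symm

instance (n : ℕ) : Fintype (pathG n).edgeSet := Subtype.fintype _

instance centralAdjDec {V : Type*} (G : SimpleGraph V) [DecidableEq V] [DecidableRel G.Adj] :
    DecidableRel (centralGraph G).Adj := fun x y =>
  match x, y with
  | Sum.inl u, Sum.inl v => (show Decidable (u ≠ v ∧ ¬ G.Adj u v) from inferInstance)
  | Sum.inl u, Sum.inr e => (show Decidable (u ∈ (e : Sym2 V)) from inferInstance)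
  | Sum.inr e, Sum.inl u => (show Decidable (u ∈ (e : Sym2 V)) from inferInstance)
  | Sum.inr _, Sum.inr _ => (show Decidable False from inferInstance)

/-! ### coloring patterns -/

def g (i : ℕ) : ℕ := 2*(i/3) + (if i % 3 = 0 then 0 else 1)
lemma g_consec {i j : ℕ} (h : g i = g j) (hne : i ≠ j) : i+1 = j ∨ j+1 = i := by
  unfold g at h; split_ifs at h <;> omega
lemma g_sing {i j : ℕ} (hj : j % 3 = 0) (h : g i = g j) : i = j := by
  unfold g at h; split_ifs at h <;> omega
lemma g_pair1 {i j : ℕ} (hj : j % 3 = 1) (h : g i = g j) : i = j ∨ i = j + 1 := by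
  unfold g at h; split_ifs at h <;> omega
lemma g_mono {i j : ℕ} (h : i ≤ j) : g i ≤ g j := by
  unfold g; split_ifs <;> omega

def h' (i : ℕ) : ℕ := 2*(i/3) + (if i % 3 = 2 then 1 else 0)
lemma h_consec {i j : ℕ} (h : h' i = h' j) (hne : i ≠ j) : i+1 = j ∨ j+1 = i := by
  unfold h' at h; split_ifs at h <;> omega
lemma h_sing {i j : ℕ} (hj : j % 3 = 2) (h : h' i = h' j) : i = j := by
  unfold h' at h; split_ifs at h <;> omega
lemma h_pair0 {i j : ℕ} (hj : j % 3 = 0) (h : h' i = h' j) : i = j ∨ i = j + 1 := by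
  unfold h' at h; split_ifs at h <;> omega
lemma h_mono {i j : ℕ} (h : i ≤ j) : h' i ≤ h' j := by
  unfold h'; split_ifs <;> omega

def fg (n : ℕ) : (Fin n ⊕ (pathG n).edgeSet) → ℕ :=
  Sum.elim (fun i => g i) (fun _ => g (n-1) + 1)

lemma fg_tdc {n : ℕ} (hn : 4 ≤ n) :
    IsTDColoring (centralGraph (pathG n)) (fg n) ∧ ∀ v, fg n v < g (n-1) + 2 := by
  have hb : ∀ u : Fin n, g u ≤ g (n-1) := fun u => g_mono (by omega)
  refine ⟨⟨?_, ?_⟩, ?_⟩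
  · rintro (u | e) (v | e') hadj
    · rw [cadj_inl_inl] at hadj
      simp only [fg, Sum.elim_inl]
      intro hg
      rcases g_consec hg (by omega) <;> omega
    · simp only [fg, Sum.elim_inl, Sum.elim_inr]
      have := hb u; omega
    · simp only [fg, Sum.elim_inl, Sum.elim_inr]
      have := hb v; omega
    · exact absurd hadj (cadj_inr_inr _ _)
  · rintro (u | e)
    · by_cases hu : 2 ≤ (u:ℕ)
      · refine ⟨g 0, ⟨Sum.inl ⟨0, by omega⟩, rfl⟩, ?_⟩
        rintro (i | e) hw
        · have : (i:ℕ) = 0 := g_sing (by norm_num) hw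
          rw [cadj_inl_inl]; omega
        · simp only [fg, Sum.elim_inr] at hw
          have := g_mono (show 0 ≤ n-1 by omega); omega
      · refine ⟨g 3, ⟨Sum.inl ⟨3, by omega⟩, rfl⟩, ?_⟩
        rintro (i | e) hw
        · have : (i:ℕ) = 3 := g_sing (by norm_num) hw
          rw [cadj_inl_inl]; omega
        · simp only [fg, Sum.elim_inr] at hw
          have := g_mono (show 3 ≤ n-1 by omega); omega
    · obtain ⟨j, hj, rfl⟩ := edge_eq_pedge e
      have h3 : j % 3 = 0 ∨ j % 3 = 1 ∨ j % 3 = 2 := by omega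
      rcases h3 with h3 | h3 | h3
      · refine ⟨g j, ⟨Sum.inl ⟨j, by omega⟩, rfl⟩, ?_⟩
        rintro (i | e) hw
        · have : (i:ℕ) = j := g_sing h3 hw
          rw [cadj_inr_inl, mem_pedge]; omega
        · simp only [fg, Sum.elim_inr] at hw
          have := g_mono (show j ≤ n-1 by omega); omega
      · refine ⟨g j, ⟨Sum.inl ⟨j, by omega⟩, rfl⟩, ?_⟩
        rintro (i | e) hw
        · have := g_pair1 h3 hw
          rw [cadj_inr_inl, mem_pedge]; omega
        · simp only [fg, Sum.elim_inr] at hw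
          have := g_mono (show j ≤ n-1 by omega); omega
      · refine ⟨g (j+1), ⟨Sum.inl ⟨j+1, by omega⟩, rfl⟩, ?_⟩
        rintro (i | e) hw
        · have : (i:ℕ) = j+1 := g_sing (by omega) hw
          rw [cadj_inr_inl, mem_pedge]; omega
        · simp only [fg, Sum.elim_inr] at hw
          have := g_mono (show j+1 ≤ n-1 by omega); omega
  · rintro (u | e)
    · simp only [fg, Sum.elim_inl]
      have := hb u; omega
    · simp only [fg, Sum.elim_inr]; omega

def fh (n : ℕ) : (Fin n ⊕ (pathG n).edgeSet) → ℕ :=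
  Sum.elim (fun i => h' i) (fun _ => h' (n-1) + 1)

lemma fh_tdc {n : ℕ} (hn : 8 ≤ n) :
    IsTDColoring (centralGraph (pathG n)) (fh n) ∧ ∀ v, fh n v < h' (n-1) + 2 := by
  have hb : ∀ u : Fin n, h' u ≤ h' (n-1) := fun u => h_mono (by omega)
  refine ⟨⟨?_, ?_⟩, ?_⟩
  · rintro (u | e) (v | e') hadj
    · rw [cadj_inl_inl] at hadj
      simp only [fh, Sum.elim_inl]
      intro hg
      rcases h_consec hg (by omega) <;> omega
    · simp only [fh, Sum.elim_inl, Sum.elim_inr]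
      have := hb u; omega
    · simp only [fh, Sum.elim_inl, Sum.elim_inr]
      have := hb v; omega
    · exact absurd hadj (cadj_inr_inr _ _)
  · rintro (u | e)
    · by_cases hu : 4 ≤ (u:ℕ)
      · refine ⟨h' 2, ⟨Sum.inl ⟨2, by omega⟩, rfl⟩, ?_⟩
        rintro (i | e) hw
        · have : (i:ℕ) = 2 := h_sing (by norm_num) hw
          rw [cadj_inl_inl]; omega
        · simp only [fh, Sum.elim_inr] at hw
          have := h_mono (show 2 ≤ n-1 by omega); omega
      · refine ⟨h' 5, ⟨Sum.inl ⟨5, by omega⟩, rfl⟩, ?_⟩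
        rintro (i | e) hw
        · have : (i:ℕ) = 5 := h_sing (by norm_num) hw
          rw [cadj_inl_inl]; omega
        · simp only [fh, Sum.elim_inr] at hw
          have := h_mono (show 5 ≤ n-1 by omega); omega
    · obtain ⟨j, hj, rfl⟩ := edge_eq_pedge e
      have h3 : j % 3 = 0 ∨ j % 3 = 1 ∨ j % 3 = 2 := by omega
      rcases h3 with h3 | h3 | h3
      · refine ⟨h' j, ⟨Sum.inl ⟨j, by omega⟩, rfl⟩, ?_⟩
        rintro (i | e) hw
        · have := h_pair0 h3 hw
          rw [cadj_inr_inl, mem_pedge]; omega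
        · simp only [fh, Sum.elim_inr] at hw
          have := h_mono (show j ≤ n-1 by omega); omega
      · refine ⟨h' (j+1), ⟨Sum.inl ⟨j+1, by omega⟩, rfl⟩, ?_⟩
        rintro (i | e) hw
        · have : (i:ℕ) = j+1 := h_sing (by omega) hw
          rw [cadj_inr_inl, mem_pedge]; omega
        · simp only [fh, Sum.elim_inr] at hw
          have := h_mono (show j+1 ≤ n-1 by omega); omega
      · refine ⟨h' j, ⟨Sum.inl ⟨j, by omega⟩, rfl⟩, ?_⟩
        rintro (i | e) hw
        · have : (i:ℕ) = j := h_sing h3 hw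
          rw [cadj_inr_inl, mem_pedge]; omega
        · simp only [fh, Sum.elim_inr] at hw
          have := h_mono (show j ≤ n-1 by omega); omega
  · rintro (u | e)
    · simp only [fh, Sum.elim_inl]
      have := hb u; omega
    · simp only [fh, Sum.elim_inr]; omega

lemma f2_tdc : IsTDColoring (centralGraph (pathG 2))
    (Sum.elim (fun _ => 0) (fun _ => 1)) ∧
    ∀ v : Fin 2 ⊕ (pathG 2).edgeSet, (Sum.elim (fun _ => 0) (fun _ => 1) : _ → ℕ) v < 2 := by
  refine ⟨⟨?_, ?_⟩, ?_⟩
  · rintro (u | e) (v | e') hadj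
    · rw [cadj_inl_inl] at hadj
      have := u.isLt; have := v.isLt; omega
    · simp
    · simp
    · exact absurd hadj (cadj_inr_inr _ _)
  · rintro (u | e)
    · refine ⟨1, ⟨Sum.inr (pedge 2 0 (by norm_num)), rfl⟩, ?_⟩
      rintro (i | e) hw
      · simp at hw
      · obtain ⟨j, hj, rfl⟩ := edge_eq_pedge e
        rw [show (Sum.inl u : Fin 2 ⊕ (pathG 2).edgeSet) = Sum.inl u from rfl]
        show u ∈ _
        rw [mem_pedge]
        have := u.isLt; omega
    · refine ⟨0, ⟨Sum.inl 0, rfl⟩, ?_⟩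
      rintro (i | e') hw
      · obtain ⟨j, hj, rfl⟩ := edge_eq_pedge e
        rw [cadj_inr_inl, mem_pedge]
        have := i.isLt; omega
      · simp at hw
  · rintro (u | e) <;> simp

lemma f3_tdc : IsTDColoring (centralGraph (pathG 3))
    (Sum.elim (fun i : Fin 3 => (i:ℕ)) (fun _ => 3)) ∧
    ∀ v : Fin 3 ⊕ (pathG 3).edgeSet, (Sum.elim (fun i : Fin 3 => (i:ℕ)) (fun _ => 3) : _ → ℕ) v < 4 := by
  refine ⟨⟨?_, ?_⟩, ?_⟩
  · rintro (u | e) (v | e') hadj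
    · rw [cadj_inl_inl] at hadj
      simp only [Sum.elim_inl]
      omega
    · have := u.isLt; simp only [Sum.elim_inl, Sum.elim_inr]; omega
    · have := v.isLt; simp only [Sum.elim_inl, Sum.elim_inr]; omega
    · exact absurd hadj (cadj_inr_inr _ _)
  · rintro (u | e)
    · have hu := u.isLt
      by_cases h1 : (u:ℕ) = 1
      · refine ⟨3, ⟨Sum.inr (pedge 3 0 (by norm_num)), rfl⟩, ?_⟩
        rintro (i | e) hw
        · have := i.isLt; simp only [Sum.elim_inl] at hw; omega
        · obtain ⟨j, hj, rfl⟩ := edge_eq_pedge e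
          show u ∈ _
          rw [mem_pedge]
          omega
      · by_cases h0 : (u:ℕ) = 0
        · refine ⟨2, ⟨Sum.inl 2, rfl⟩, ?_⟩
          rintro (i | e) hw
          · simp only [Sum.elim_inl] at hw
            rw [cadj_inl_inl]; omega
          · simp only [Sum.elim_inr] at hw; omega
        · refine ⟨0, ⟨Sum.inl 0, rfl⟩, ?_⟩
          rintro (i | e) hw
          · simp only [Sum.elim_inl] at hw
            rw [cadj_inl_inl]; omega
          · simp only [Sum.elim_inr] at hw; omega
    · obtain ⟨j, hj, rfl⟩ := edge_eq_pedge e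
      by_cases hj0 : j = 0
      · subst hj0
        refine ⟨0, ⟨Sum.inl 0, rfl⟩, ?_⟩
        rintro (i | e) hw
        · simp only [Sum.elim_inl] at hw
          rw [cadj_inr_inl, mem_pedge]; omega
        · simp only [Sum.elim_inr] at hw; omega
      · have hj1 : j = 1 := by omega
        subst hj1
        refine ⟨2, ⟨Sum.inl 2, rfl⟩, ?_⟩
        rintro (i | e) hw
        · simp only [Sum.elim_inl] at hw
          rw [cadj_inr_inl, mem_pedge]; omega
        · simp only [Sum.elim_inr] at hw; omega
  · rintro (u | e)
    · have := u.isLt; simp only [Sum.elim_inl]; omega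
    · simp

/-! ### lower bound -/

lemma consec_of_eq {n : ℕ} {f : Fin n ⊕ (pathG n).edgeSet → ℕ}
    (hp : ∀ u v, (centralGraph (pathG n)).Adj u v → f u ≠ f v)
    {u v : Fin n} (hne : u ≠ v) (h : f (Sum.inl u) = f (Sum.inl v)) :
    (u:ℕ)+1 = v ∨ (v:ℕ)+1 = u := by
  by_contra hc
  push_neg at hc
  exact hp _ _ ((cadj_inl_inl u v).mpr
    ⟨fun hv => hne (Fin.ext hv), hc.1, hc.2⟩) h

lemma lower_general {n k : ℕ} (hn : 2 ≤ n) (f : Fin n ⊕ (pathG n).edgeSet → ℕ)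
    (hf : IsTDColoring (centralGraph (pathG n)) f) (hb : ∀ v, f v < k) :
    2*n + 2 ≤ 3*k := by
  classical
  obtain ⟨hp, hd⟩ := hf
  -- the covering color for each edge
  have Hcov : ∀ j : ℕ, ∃ c : ℕ, ∀ (hj : j + 1 < n),
      (c < k ∧ (∃ w, f w = c) ∧
        ∀ w, f w = c → (w = Sum.inl ⟨j, by omega⟩ ∨ w = Sum.inl ⟨j+1, by omega⟩)) := by
    intro j
    by_cases hj : j + 1 < n
    · obtain ⟨c, ⟨w0, hw0⟩, hall⟩ := hd (Sum.inr (pedge n j hj))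
      refine ⟨c, fun _ => ⟨hw0 ▸ hb w0, ⟨w0, hw0⟩, ?_⟩⟩
      rintro (u | e) hw
      · have := hall _ hw
        rw [show (centralGraph (pathG n)).Adj (Sum.inr (pedge n j hj)) (Sum.inl u)
              ↔ u ∈ ((pedge n j hj : (pathG n).edgeSet) : Sym2 (Fin n)) from Iff.rfl,
            mem_pedge] at this
        rcases this with h | h
        · exact Or.inl (by apply congrArg; exact Fin.ext h)
        · exact Or.inr (by apply congrArg; exact Fin.ext h)
      · exact absurd (hall _ hw) (fun h => h)
    · exact ⟨0, fun h => absurd h hj⟩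
  choose cov hcov using Hcov
  set IC : ℕ → ℕ := fun c => (univ.filter fun i : Fin n => f (Sum.inl i) = c).card with hIC
  set EC : ℕ → ℕ := fun c => ((range (n-1)).filter fun j => cov j = c).card with hEC
  have hjlt : ∀ j ∈ range (n-1), j + 1 < n := by intro j hj; rw [mem_range] at hj; omega
  -- sums
  have sumIC : ∑ c ∈ range k, IC c = n := by
    simp only [hIC]
    rw [← Finset.card_eq_sum_card_fiberwise (fun i _ => mem_range.mpr (hb (Sum.inl i)))]
    simp
  have sumEC : ∑ c ∈ range k, EC c = n - 1 := by
    simp only [hEC]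
    rw [← Finset.card_eq_sum_card_fiberwise
      (fun j hj => mem_range.mpr ((hcov j (hjlt j hj)).1))]
    simp
  -- IC ≤ 2
  have hIC2 : ∀ c, IC c ≤ 2 := by
    intro c
    by_contra hc
    push_neg at hc
    obtain ⟨a, b, d, ha, hbb, hdd, hab, had, hbd⟩ := Finset.two_lt_card_iff.mp hc
    rw [mem_filter] at ha hbb hdd
    have h1 := consec_of_eq hp hab (ha.2.trans hbb.2.symm)
    have h2 := consec_of_eq hp had (ha.2.trans hdd.2.symm)
    have h3 := consec_of_eq hp hbd (hbb.2.trans hdd.2.symm)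
    have : (a:ℕ) ≠ b := fun h => hab (Fin.ext h)
    have : (a:ℕ) ≠ d := fun h => had (Fin.ext h)
    have : (b:ℕ) ≠ d := fun h => hbd (Fin.ext h)
    omega
  -- pure singleton from two covered edges
  have Two : ∀ c, ∀ j ∈ range (n-1), ∀ j' ∈ range (n-1), j ≠ j' → cov j = c → cov j' = c →
      ∃ u : Fin n, ((u:ℕ) = j ∨ (u:ℕ) = j+1) ∧ ((u:ℕ) = j' ∨ (u:ℕ) = j'+1) ∧
        ∀ w, f w = c → w = Sum.inl u := by
    intro c j hj j' hj' hne hcj hcj'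
    have H := hcov j (hjlt j hj)
    have H' := hcov j' (hjlt j' hj')
    rw [hcj] at H; rw [hcj'] at H'
    obtain ⟨-, ⟨w0, hw0⟩, hpure⟩ := H
    obtain ⟨-, -, hpure'⟩ := H'
    -- the common vertex
    have key : ∀ w, f w = c → ∃ u : Fin n, w = Sum.inl u ∧
        ((u:ℕ) = j ∨ (u:ℕ) = j+1) ∧ ((u:ℕ) = j' ∨ (u:ℕ) = j'+1) := by
      intro w hw
      rcases hpure w hw with h | h <;> rcases hpure' w hw with h' | h' <;>
        exact ⟨_, h, by rw [h] at h'; simp_all [Sum.inl.injEq, Fin.ext_iff]⟩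
    obtain ⟨u0, rfl, hu1, hu2⟩ := key w0 hw0
    refine ⟨u0, hu1, hu2, ?_⟩
    intro w hw
    obtain ⟨u, rfl, hv1, hv2⟩ := key w hw
    have : (u:ℕ) = (u0:ℕ) := by omega
    rw [Fin.ext this]
  -- EC ≤ 2
  have hEC2 : ∀ c, EC c ≤ 2 := by
    intro c
    by_contra hc
    push_neg at hc
    obtain ⟨a, b, d, ha, hbb, hdd, hab, had, hbd⟩ := Finset.two_lt_card_iff.mp hc
    rw [mem_filter] at ha hbb hdd
    obtain ⟨u, hu1, hu2, hcl⟩ := Two c a ha.1 b hbb.1 hab ha.2 hbb.2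
    -- d also covered: its witness forces d ∈ {u-1, u}  via hcov d
    obtain ⟨-, ⟨w0, hw0⟩, hpured⟩ := hcov d (hjlt d hdd.1)
    have := hcl w0 (hw0.trans hdd.2)
    subst this
    have hab' : (a:ℕ) ≠ b := hab
    have had' : (a:ℕ) ≠ d := had
    have hbd' : (b:ℕ) ≠ d := hbd
    rcases hpured _ hw0 with h | h <;>
      · rw [Sum.inl.injEq] at h
        rw [h] at hu1 hu2
        simp only [Fin.val_mk] at hu1 hu2
        omega
  -- EC = 2 → IC ≤ 1 ; and purity facts. We prove score bound directly:
  have score3 : ∀ c, IC c + EC c ≤ 3 := by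
    intro c
    rcases Nat.lt_or_ge (EC c) 2 with h | h
    · have := hIC2 c; omega
    · have h2 : EC c = 2 := le_antisymm (hEC2 c) h
      -- get two distinct covered edges
      have : 1 < ((range (n-1)).filter fun j => cov j = c).card := by
        simp only [hEC] at h2; omega
      obtain ⟨a, b, ha, hbb, hab⟩ := Finset.one_lt_card_iff.mp this
      rw [mem_filter] at ha hbb
      obtain ⟨u, -, -, hcl⟩ := Two c a ha.1 b hbb.1 hab ha.2 hbb.2
      have : IC c ≤ 1 := by
        simp only [hIC]
        apply Finset.card_le_one.mpr
        intro x hx y hy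
        rw [mem_filter] at hx hy
        have hx' := hcl _ hx.2
        have hy' := hcl _ hy.2
        rw [Sum.inl.injEq] at hx' hy'
        rw [hx', hy']
      omega
  -- sub colors
  have hE0 : (pathG n).edgeSet.Nonempty := ⟨_, (pedge n 0 (by omega)).2⟩
  set SC : Finset ℕ := Finset.image (fun e : (pathG n).edgeSet => f (Sum.inr e)) univ with hSC
  have hSCne : SC.Nonempty := ⟨f (Sum.inr ⟨_, hE0.choose_spec⟩), by
    rw [hSC]; exact mem_image.mpr ⟨_, mem_univ _, rfl⟩⟩
  have hSCsub : SC ⊆ range k := by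
    intro c hc
    rw [hSC, mem_image] at hc
    obtain ⟨e, -, rfl⟩ := hc
    exact mem_range.mpr (hb _)
  -- sub color has EC = 0
  have hsubEC : ∀ c ∈ SC, EC c = 0 := by
    intro c hc
    rw [hSC, mem_image] at hc
    obtain ⟨e, -, he⟩ := hc
    simp only [hEC]
    rw [Finset.card_eq_zero]
    by_contra hne
    obtain ⟨j, hj⟩ := Finset.nonempty_iff_ne_empty.mpr hne
    rw [mem_filter] at hj
    have H := hcov j (hjlt j hj.1)
    rcases H.2.2 _ (he.trans hj.2.symm) with h | h <;> exact absurd h (by simp)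
  -- sub color has IC ≤ 1
  have hsubIC : ∀ c ∈ SC, IC c ≤ 1 := by
    intro c hc
    rw [hSC, mem_image] at hc
    obtain ⟨e, -, he⟩ := hc
    simp only [hIC]
    apply Finset.card_le_one.mpr
    intro x hx y hy
    rw [mem_filter] at hx hy
    by_contra hxy
    have hcons := consec_of_eq hp (fun h => hxy (by rw [h])) (hx.2.trans hy.2.symm)
    -- wlog x+1 = y : get edge between them covered with color c, contradicting EC c = 0
    have glue : ∀ a b : Fin n, (a:ℕ)+1 = (b:ℕ) → f (Sum.inl a) = c → f (Sum.inl b) = c → False := by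
      intro a b hab hfa hfb
      have hlt : (a:ℕ) + 1 < n := by have := b.isLt; omega
      have H := hcov (a:ℕ) hlt
      obtain ⟨-, ⟨w0, hw0⟩, hpure⟩ := H
      have hcovc : cov (a:ℕ) = c := by
        rcases hpure _ hw0 with h | h <;> rw [h] at hw0 <;> rw [← hw0]
        · exact hfa
        · rw [show (⟨(a:ℕ)+1, by omega⟩ : Fin n) = b from Fin.ext hab]
          exact hfb
      have hec0 : EC c = 0 := hsubEC c (by rw [hSC, mem_image]; exact ⟨e, mem_univ _, he⟩)
      simp only [hEC] at hec0
      rw [Finset.card_eq_zero] at hec0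
      have hmem : (a:ℕ) ∈ (range (n-1)).filter fun j => cov j = c :=
        mem_filter.mpr ⟨mem_range.mpr (by omega), hcovc⟩
      rw [hec0] at hmem
      exact absurd hmem (Finset.notMem_empty _)
    rcases hcons with h | h
    · exact glue x y h hx.2 hy.2
    · exact glue y x h hy.2 hx.2
  -- if all subs share one color, that color has IC = 0
  have honesub : SC.card = 1 → ∀ c ∈ SC, IC c = 0 := by
    intro h1 c hc
    have hall : ∀ e : (pathG n).edgeSet, f (Sum.inr e) = c := by
      intro e
      have h2 : f (Sum.inr e) ∈ SC := by rw [hSC, mem_image]; exact ⟨e, mem_univ _, rfl⟩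
      obtain ⟨c0, hc0⟩ := Finset.card_eq_one.mp h1
      rw [hc0, mem_singleton] at h2 hc
      rw [h2, hc]
    simp only [hIC]
    rw [Finset.card_eq_zero]
    rw [Finset.eq_empty_iff_forall_notMem]
    intro i hi
    rw [mem_filter] at hi
    -- find an edge containing i
    rcases Nat.lt_or_ge ((i:ℕ)+1) n with hlt | hge
    · have : (centralGraph (pathG n)).Adj (Sum.inl i) (Sum.inr (pedge n (i:ℕ) hlt)) :=
        (cadj_inl_inr _ _).mpr ((mem_pedge hlt i).mpr (Or.inl rfl))
      exact hp _ _ this (hi.2.trans (hall _).symm)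
    · have hi2 : (i:ℕ) = n - 1 := by have := i.isLt; omega
      have hlt : (n-2) + 1 < n := by omega
      have : (centralGraph (pathG n)).Adj (Sum.inl i) (Sum.inr (pedge n (n-2) hlt)) :=
        (cadj_inl_inr _ _).mpr ((mem_pedge hlt i).mpr (Or.inr (by omega)))
      exact hp _ _ this (hi.2.trans (hall _).symm)
  -- final counting
  have hsplit : ∑ c ∈ range k, (IC c + EC c) =
      ∑ c ∈ SC, (IC c + EC c) + ∑ c ∈ range k \ SC, (IC c + EC c) := by
    rw [← Finset.sum_sdiff hSCsub]; ring
  have hrest : ∑ c ∈ range k \ SC, (IC c + EC c) ≤ 3 * (k - SC.card) := by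
    calc ∑ c ∈ range k \ SC, (IC c + EC c) ≤ ∑ _c ∈ range k \ SC, 3 :=
          Finset.sum_le_sum (fun c _ => score3 c)
      _ = 3 * (k - SC.card) := by
          rw [Finset.sum_const, Finset.card_sdiff_of_subset hSCsub, card_range, smul_eq_mul]
          ring
  have htot : ∑ c ∈ range k, (IC c + EC c) = n + (n-1) := by
    rw [Finset.sum_add_distrib, sumIC, sumEC]
  have hk : SC.card ≤ k := by
    have := Finset.card_le_card hSCsub
    simpa using this
  rcases Nat.lt_or_ge SC.card 2 with hs | hs
  · have hs1 : SC.card = 1 := by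
      have := Finset.card_pos.mpr hSCne; omega
    have hzero : ∑ c ∈ SC, (IC c + EC c) = 0 := by
      apply Finset.sum_eq_zero
      intro c hc
      simp [honesub hs1 c hc, hsubEC c hc]
    omega
  · have hSCsum : ∑ c ∈ SC, (IC c + EC c) ≤ SC.card := by
      calc ∑ c ∈ SC, (IC c + EC c) ≤ ∑ _c ∈ SC, 1 :=
            Finset.sum_le_sum (fun c hc => by have := hsubIC c hc; have := hsubEC c hc; omega)
        _ = SC.card := by rw [Finset.sum_const, smul_eq_mul]; ring
    omega

def TDCFin {V : Type*} (G : SimpleGraph V) {k : ℕ} (f : V → Fin k) : Prop :=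
  (∀ u v, G.Adj u v → f u ≠ f v) ∧
  ∀ v, ∃ c : Fin k, (∃ w, f w = c) ∧ ∀ w, f w = c → G.Adj v w

instance {V : Type*} (G : SimpleGraph V) [Fintype V] [DecidableEq V] [DecidableRel G.Adj]
    {k : ℕ} (f : V → Fin k) : Decidable (TDCFin G f) := by
  unfold TDCFin; infer_instance

lemma toFin {V : Type*} (G : SimpleGraph V) {k : ℕ} (f : V → ℕ) (hf : IsTDColoring G f)
    (hb : ∀ v, f v < k) : ∃ f' : V → Fin k, TDCFin G f' := by
  refine ⟨fun v => ⟨f v, hb v⟩, ?_, ?_⟩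
  · intro u v h hq
    exact hf.1 u v h (congrArg Fin.val hq)
  · intro v
    obtain ⟨c, ⟨w, hw⟩, hall⟩ := hf.2 v
    refine ⟨⟨c, hw ▸ hb w⟩, ⟨w, Fin.ext hw⟩, ?_⟩
    intro w' hw'
    exact hall w' (congrArg Fin.val hw')

set_option maxHeartbeats 4000000 in
set_option maxRecDepth 40000 in
lemma nof3 : ¬ ∃ f : (Fin 3 ⊕ (pathG 3).edgeSet) → Fin 3, TDCFin (centralGraph (pathG 3)) f := by
  decide

lemma low3 {k : ℕ} (f : Fin 3 ⊕ (pathG 3).edgeSet → ℕ)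
    (hf : IsTDColoring (centralGraph (pathG 3)) f) (hb : ∀ v, f v < k) : 4 ≤ k := by
  by_contra hk
  push_neg at hk
  have hb3 : ∀ v, f v < 3 := fun v => lt_of_lt_of_le (hb v) (by omega)
  exact nof3 (toFin _ f hf hb3)

lemma edge_color {n : ℕ} {f : Fin n ⊕ (pathG n).edgeSet → ℕ}
    (hd : ∀ v, ∃ c, (∃ w, f w = c) ∧ ∀ w, f w = c → (centralGraph (pathG n)).Adj v w)
    {j : ℕ} (hj : j + 1 < n) :
    ∃ c, (∃ w, f w = c) ∧
      ∀ w, f w = c → (w = Sum.inl ⟨j, Nat.lt_of_succ_lt hj⟩ ∨ w = Sum.inl ⟨j+1, hj⟩) := by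
  obtain ⟨c, hne, hall⟩ := hd (Sum.inr (pedge n j hj))
  refine ⟨c, hne, ?_⟩
  rintro (u | e) hw
  · have := hall _ hw
    rw [show (centralGraph (pathG n)).Adj (Sum.inr (pedge n j hj)) (Sum.inl u)
          ↔ u ∈ ((pedge n j hj : (pathG n).edgeSet) : Sym2 (Fin n)) from Iff.rfl,
        mem_pedge] at this
    rcases this with h | h
    · exact Or.inl (by apply congrArg; exact Fin.ext h)
    · exact Or.inr (by apply congrArg; exact Fin.ext h)
  · exact absurd (hall _ hw) (fun h => h)

lemma nof5' (f : Fin 5 ⊕ (pathG 5).edgeSet → ℕ)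
    (hp : ∀ u v, (centralGraph (pathG 5)).Adj u v → f u ≠ f v)
    (hd : ∀ v, ∃ c, (∃ w, f w = c) ∧ ∀ w, f w = c → (centralGraph (pathG 5)).Adj v w)
    (hb : ∀ v, f v < 4) : False := by
  obtain ⟨d0, ⟨w0, hw0⟩, hp0⟩ := edge_color hd (show 0+1 < 5 by norm_num)
  obtain ⟨d1, ⟨w1, hw1⟩, hp1⟩ := edge_color hd (show 1+1 < 5 by norm_num)
  obtain ⟨d2, ⟨w2, hw2⟩, hp2⟩ := edge_color hd (show 2+1 < 5 by norm_num)
  obtain ⟨d3, ⟨w3, hw3⟩, hp3⟩ := edge_color hd (show 3+1 < 5 by norm_num)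
  have hd0 : d0 < 4 := hw0 ▸ hb w0
  have hd1 : d1 < 4 := hw1 ▸ hb w1
  have hd2 : d2 < 4 := hw2 ▸ hb w2
  have hd3 : d3 < 4 := hw3 ▸ hb w3
  -- names for the vertex colors
  obtain ⟨c0, hc0⟩ : ∃ x, f (Sum.inl (⟨0, by norm_num⟩ : Fin 5)) = x := ⟨_, rfl⟩
  obtain ⟨c1, hc1⟩ : ∃ x, f (Sum.inl (⟨1, by norm_num⟩ : Fin 5)) = x := ⟨_, rfl⟩
  obtain ⟨c2, hc2⟩ : ∃ x, f (Sum.inl (⟨2, by norm_num⟩ : Fin 5)) = x := ⟨_, rfl⟩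
  obtain ⟨c3, hc3⟩ : ∃ x, f (Sum.inl (⟨3, by norm_num⟩ : Fin 5)) = x := ⟨_, rfl⟩
  obtain ⟨c4, hc4⟩ : ∃ x, f (Sum.inl (⟨4, by norm_num⟩ : Fin 5)) = x := ⟨_, rfl⟩
  obtain ⟨t0, ht0⟩ : ∃ x, f (Sum.inr (pedge 5 0 (by norm_num))) = x := ⟨_, rfl⟩
  obtain ⟨t2, ht2⟩ : ∃ x, f (Sum.inr (pedge 5 2 (by norm_num))) = x := ⟨_, rfl⟩
  obtain ⟨t3, ht3⟩ : ∃ x, f (Sum.inr (pedge 5 3 (by norm_num))) = x := ⟨_, rfl⟩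
  have bc0 : c0 < 4 := hc0 ▸ hb _
  have bc1 : c1 < 4 := hc1 ▸ hb _
  have bc2 : c2 < 4 := hc2 ▸ hb _
  have bc3 : c3 < 4 := hc3 ▸ hb _
  have bc4 : c4 < 4 := hc4 ▸ hb _
  have bt0 : t0 < 4 := ht0 ▸ hb _
  have bt2 : t2 < 4 := ht2 ▸ hb _
  have bt3 : t3 < 4 := ht3 ▸ hb _
  -- far-apart edge colors differ
  have hne02 : d0 ≠ d2 := by
    intro h
    rcases hp0 w2 (by rw [hw2, h]) with h' | h' <;> rcases hp2 w2 hw2 with h'' | h'' <;>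
      (rw [h'] at h''; simp only [Sum.inl.injEq, Fin.mk.injEq] at h''; omega)
  have hne03 : d0 ≠ d3 := by
    intro h
    rcases hp0 w3 (by rw [hw3, h]) with h' | h' <;> rcases hp3 w3 hw3 with h'' | h'' <;>
      (rw [h'] at h''; simp only [Sum.inl.injEq, Fin.mk.injEq] at h''; omega)
  have hne13 : d1 ≠ d3 := by
    intro h
    rcases hp1 w3 (by rw [hw3, h]) with h' | h' <;> rcases hp3 w3 hw3 with h'' | h'' <;>
      (rw [h'] at h''; simp only [Sum.inl.injEq, Fin.mk.injEq] at h''; omega)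
  -- sub colors avoid all pure edge colors
  have hT : ∀ (e : (pathG 5).edgeSet) (x : ℕ), f (Sum.inr e) = x →
      x ≠ d0 ∧ x ≠ d1 ∧ x ≠ d2 ∧ x ≠ d3 := by
    intro e x hx
    refine ⟨?_, ?_, ?_, ?_⟩ <;> intro h
    · rcases hp0 _ (by rw [hx, h] : f (Sum.inr e) = d0) with h' | h' <;> simp at h'
    · rcases hp1 _ (by rw [hx, h] : f (Sum.inr e) = d1) with h' | h' <;> simp at h'
    · rcases hp2 _ (by rw [hx, h] : f (Sum.inr e) = d2) with h' | h' <;> simp at h'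
    · rcases hp3 _ (by rw [hx, h] : f (Sum.inr e) = d3) with h' | h' <;> simp at h'
  obtain ⟨ht00, ht01, ht02, ht03⟩ := hT _ _ ht0
  obtain ⟨ht20, ht21, ht22, ht23⟩ := hT _ _ ht2
  obtain ⟨ht30, ht31, ht32, ht33⟩ := hT _ _ ht3
  -- original vertices adjacent to a sub differ from it in color
  have adj0 : c0 ≠ t0 := by
    rw [← hc0, ← ht0]
    exact hp _ _ ((cadj_inl_inr _ _).mpr ((mem_pedge _ _).mpr (Or.inl rfl)))
  have adj1 : c1 ≠ t0 := by
    rw [← hc1, ← ht0]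
    exact hp _ _ ((cadj_inl_inr _ _).mpr ((mem_pedge _ _).mpr (Or.inr rfl)))
  have adj3 : c3 ≠ t2 := by
    rw [← hc3, ← ht2]
    exact hp _ _ ((cadj_inl_inr _ _).mpr ((mem_pedge _ _).mpr (Or.inr rfl)))
  have adj4 : c4 ≠ t3 := by
    rw [← hc4, ← ht3]
    exact hp _ _ ((cadj_inl_inr _ _).mpr ((mem_pedge _ _).mpr (Or.inr rfl)))
  -- helper: singleton class when two adjacent edges share a color
  have mkSing : ∀ {x a : ℕ} (ha1 : a+1 < 5) (ha2 : a+1+1 < 5),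
      (∀ w, f w = x → (w = Sum.inl ⟨a, by omega⟩ ∨ w = Sum.inl ⟨a+1, ha1⟩)) →
      (∀ w, f w = x → (w = Sum.inl ⟨a+1, by omega⟩ ∨ w = Sum.inl ⟨a+1+1, ha2⟩)) →
      (∀ w, f w = x → w = Sum.inl ⟨a+1, ha1⟩) := by
    intro x a ha1 ha2 H1 H2 w hw
    rcases H1 w hw with h | h
    · rcases H2 w hw with h' | h' <;>
        (rw [h] at h'; simp only [Sum.inl.injEq, Fin.mk.injEq] at h'; omega)
    · exact h
  by_cases h01 : d0 = d1
  · -- class of d0 is exactly {vertex 1}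
    have sing1 := mkSing (by norm_num) (by norm_num) hp0 (fun w hw => hp1 w (h01 ▸ hw))
    have r0 : ∀ (b : ℕ) (hb5 : b < 5) (x : ℕ), f (Sum.inl (⟨b, hb5⟩ : Fin 5)) = x →
        b ≠ 1 → x ≠ d0 := by
      intro b hb5 x hx hb1 h
      have := sing1 _ (by rw [hx, h] : f (Sum.inl (⟨b, hb5⟩ : Fin 5)) = d0)
      simp only [Sum.inl.injEq, Fin.mk.injEq] at this
      omega
    by_cases h23 : d2 = d3
    · have sing3 := mkSing (by norm_num) (by norm_num) hp2 (fun w hw => hp3 w (h23 ▸ hw))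
      have r2 : ∀ (b : ℕ) (hb5 : b < 5) (x : ℕ), f (Sum.inl (⟨b, hb5⟩ : Fin 5)) = x →
          b ≠ 3 → x ≠ d2 := by
        intro b hb5 x hx hb1 h
        have := sing3 _ (by rw [hx, h] : f (Sum.inl (⟨b, hb5⟩ : Fin 5)) = d2)
        simp only [Sum.inl.injEq, Fin.mk.injEq] at this
        omega
      -- c0, c2, c4 pairwise distinct and ∉ {d0, d2}
      have q02 : c0 ≠ c2 := by
        rw [← hc0, ← hc2]
        exact hp _ _ ((cadj_inl_inl _ _).mpr ⟨by norm_num, by norm_num, by norm_num⟩)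
      have q04 : c0 ≠ c4 := by
        rw [← hc0, ← hc4]
        exact hp _ _ ((cadj_inl_inl _ _).mpr ⟨by norm_num, by norm_num, by norm_num⟩)
      have q24 : c2 ≠ c4 := by
        rw [← hc2, ← hc4]
        exact hp _ _ ((cadj_inl_inl _ _).mpr ⟨by norm_num, by norm_num, by norm_num⟩)
      have m1 := r0 0 (by norm_num) c0 hc0 (by norm_num)
      have m2 := r0 2 (by norm_num) c2 hc2 (by norm_num)
      have m3 := r0 4 (by norm_num) c4 hc4 (by norm_num)
      have m4 := r2 0 (by norm_num) c0 hc0 (by norm_num)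
      have m5 := r2 2 (by norm_num) c2 hc2 (by norm_num)
      have m6 := r2 4 (by norm_num) c4 hc4 (by norm_num)
      clear * - q02 q04 q24 m1 m2 m3 m4 m5 m6 bc0 bc2 bc4 hd0 hd2 hne02
      omega
    · -- vertex 0 has no available color: colors are {d0, d2, d3, t0}
      have k0 : c0 ≠ d0 := r0 0 (by norm_num) c0 hc0 (by norm_num)
      have k2 : c0 ≠ d2 := by
        intro h
        rcases hp2 _ (by rw [hc0, h] : f (Sum.inl (⟨0, by norm_num⟩ : Fin 5)) = d2) with h' | h' <;>
          (simp only [Sum.inl.injEq, Fin.mk.injEq] at h'; omega)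
      have k3 : c0 ≠ d3 := by
        intro h
        rcases hp3 _ (by rw [hc0, h] : f (Sum.inl (⟨0, by norm_num⟩ : Fin 5)) = d3) with h' | h' <;>
          (simp only [Sum.inl.injEq, Fin.mk.injEq] at h'; omega)
      clear * - k0 k2 k3 adj0 bc0 bt0 hd0 hd2 hd3 hne02 hne03 h23 ht00 ht02 ht03
      omega
  · by_cases h23 : d2 = d3
    · -- vertex 4 has no available color: colors are {d0, d1, d2, t3}
      have sing3 := mkSing (by norm_num) (by norm_num) hp2 (fun w hw => hp3 w (h23 ▸ hw))
      have hne12 : d1 ≠ d2 := fun h => hne13 (h.trans h23)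
      have k2 : c4 ≠ d2 := by
        intro h
        have := sing3 _ (by rw [hc4, h] : f (Sum.inl (⟨4, by norm_num⟩ : Fin 5)) = d2)
        simp only [Sum.inl.injEq, Fin.mk.injEq] at this
        omega
      have k0 : c4 ≠ d0 := by
        intro h
        rcases hp0 _ (by rw [hc4, h] : f (Sum.inl (⟨4, by norm_num⟩ : Fin 5)) = d0) with h' | h' <;>
          (simp only [Sum.inl.injEq, Fin.mk.injEq] at h'; omega)
      have k1 : c4 ≠ d1 := by
        intro h
        rcases hp1 _ (by rw [hc4, h] : f (Sum.inl (⟨4, by norm_num⟩ : Fin 5)) = d1) with h' | h' <;>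
          (simp only [Sum.inl.injEq, Fin.mk.injEq] at h'; omega)
      clear * - k0 k1 k2 adj4 bc4 bt3 hd0 hd1 hd2 hne02 hne12 h01 ht30 ht31 ht32
      omega
    · by_cases h12 : d1 = d2
      · -- classes {0,1}=d0, {2}=d1, {3,4}=d3, subs=t0; vertex 2 undominated
        have sing2 := mkSing (by norm_num) (by norm_num) hp1 (fun w hw => hp2 w (h12 ▸ hw))
        have e2 : c2 = d1 := by
          have h := sing2 w1 hw1
          rw [h] at hw1
          rw [← hc2, ← hw1]
        -- vertex 1 must have color d0
        have r11 : c1 ≠ d1 := by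
          intro h
          have := sing2 _ (by rw [hc1, h] : f (Sum.inl (⟨1, by norm_num⟩ : Fin 5)) = d1)
          simp only [Sum.inl.injEq, Fin.mk.injEq] at this
          omega
        have r13 : c1 ≠ d3 := by
          intro h
          rcases hp3 _ (by rw [hc1, h] : f (Sum.inl (⟨1, by norm_num⟩ : Fin 5)) = d3) with h' | h' <;>
            (simp only [Sum.inl.injEq, Fin.mk.injEq] at h'; omega)
        have c1d0 : c1 = d0 := by
          clear * - r11 r13 adj1 bc1 bt0 hd0 hd1 hd3 h01 hne03 hne13 ht00 ht01 ht03
          omega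
        -- vertex 3 must have color d3
        have r31 : c3 ≠ d1 := by
          intro h
          have := sing2 _ (by rw [hc3, h] : f (Sum.inl (⟨3, by norm_num⟩ : Fin 5)) = d1)
          simp only [Sum.inl.injEq, Fin.mk.injEq] at this
          omega
        have r30 : c3 ≠ d0 := by
          intro h
          rcases hp0 _ (by rw [hc3, h] : f (Sum.inl (⟨3, by norm_num⟩ : Fin 5)) = d0) with h' | h' <;>
            (simp only [Sum.inl.injEq, Fin.mk.injEq] at h'; omega)
        have t2t0 : t2 = t0 := by
          clear * - bt0 bt2 hd0 hd1 hd3 h01 hne03 hne13 ht00 ht01 ht03 ht20 ht21 ht23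
          omega
        have c3d3 : c3 = d3 := by
          clear * - r31 r30 adj3 t2t0 bc3 bt0 hd0 hd1 hd3 h01 hne03 hne13 ht00 ht01 ht03
          omega
        -- now vertex 2 cannot be dominated
        obtain ⟨dd, ⟨wd, hwd⟩, halld⟩ := hd (Sum.inl (⟨2, by norm_num⟩ : Fin 5))
        have hdd4 : dd < 4 := hwd ▸ hb wd
        have hddc : dd = d0 ∨ dd = d1 ∨ dd = d3 ∨ dd = t0 := by
          clear * - hdd4 bt0 hd0 hd1 hd3 h01 hne03 hne13 ht00 ht01 ht03
          omega
        rcases hddc with hc | hc | hc | hc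
        · have := halld (Sum.inl (⟨1, by norm_num⟩ : Fin 5)) (by rw [hc1, c1d0, hc])
          rw [cadj_inl_inl] at this
          exact this.2.2 rfl
        · have := halld (Sum.inl (⟨2, by norm_num⟩ : Fin 5)) (by rw [hc2, e2, hc])
          rw [cadj_inl_inl] at this
          exact this.1 rfl
        · have := halld (Sum.inl (⟨3, by norm_num⟩ : Fin 5)) (by rw [hc3, c3d3, hc])
          rw [cadj_inl_inl] at this
          exact this.2.1 rfl
        · have := halld (Sum.inr (pedge 5 0 (by norm_num))) (by rw [ht0, hc])
          rw [cadj_inl_inr, mem_pedge] at this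
          exact (by decide : ¬((2:ℕ) = 0 ∨ (2:ℕ) = 0 + 1)) this
      · -- all four edge colors distinct, plus t0: five colors
        clear * - h01 h12 h23 hne02 hne03 hne13 ht00 ht01 ht02 ht03 hd0 hd1 hd2 hd3 bt0
        omega

lemma low5 {k : ℕ} (f : Fin 5 ⊕ (pathG 5).edgeSet → ℕ)
    (hf : IsTDColoring (centralGraph (pathG 5)) f) (hb : ∀ v, f v < k) : 5 ≤ k := by
  by_contra hk
  push_neg at hk
  have hb4 : ∀ v, f v < 4 := fun v => lt_of_lt_of_le (hb v) (by omega)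
  exact nof5' f hf.1 hf.2 hb4

end TDCaux

theorem tdcn_central_path (n : ℕ) (hn : 2 ≤ n) :
    (n % 3 = 1 ∨ n = 3 ∨ n = 5 → tdcn (centralGraph (pathG n)) = 2 * n / 3 + 2) ∧
    (¬ (n % 3 = 1 ∨ n = 3 ∨ n = 5) →
      tdcn (centralGraph (pathG n)) = 2 * n / 3 + 1) := by
  have key : ∀ (K : ℕ),
      (∃ f, IsTDColoring (centralGraph (pathG n)) f ∧ ∀ v, f v < K) →
      (∀ k, (∃ f, IsTDColoring (centralGraph (pathG n)) f ∧ ∀ v, f v < k) → K ≤ k) →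
      tdcn (centralGraph (pathG n)) = K := by
    intro K hmem hlow
    exact le_antisymm (Nat.sInf_le hmem) (le_csInf ⟨K, hmem⟩ (fun k hk => hlow k hk))
  constructor
  · intro hc
    rcases hc with h1 | h3 | h5
    · -- n ≡ 1 mod 3, n ≥ 4
      have hn4 : 4 ≤ n := by omega
      have harith : TDCaux.g (n-1) + 2 = 2 * n / 3 + 2 := by
        unfold TDCaux.g; split_ifs <;> omega
      rw [← harith]
      apply key
      · exact ⟨_, (TDCaux.fg_tdc hn4).1, (TDCaux.fg_tdc hn4).2⟩
      · intro k hk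
        obtain ⟨f, hf, hb⟩ := hk
        have := TDCaux.lower_general hn f hf hb
        unfold TDCaux.g; split_ifs <;> omega
    · subst h3
      have h4 : 2 * 3 / 3 + 2 = 4 := by norm_num
      rw [h4]
      apply key
      · exact ⟨_, TDCaux.f3_tdc.1, TDCaux.f3_tdc.2⟩
      · intro k hk
        obtain ⟨f, hf, hb⟩ := hk
        exact TDCaux.low3 f hf hb
    · subst h5
      have h5' : 2 * 5 / 3 + 2 = 5 := by norm_num
      rw [h5']
      apply key
      · refine ⟨_, (TDCaux.fg_tdc (by norm_num)).1, fun v => ?_⟩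
        have := (TDCaux.fg_tdc (by norm_num)).2 v
        have hg : TDCaux.g (5-1) + 2 = 5 := by norm_num [TDCaux.g]
        omega
      · intro k hk
        obtain ⟨f, hf, hb⟩ := hk
        exact TDCaux.low5 f hf hb
  · intro hc
    push_neg at hc
    obtain ⟨h1, h3, h5⟩ := hc
    have hmod : n % 3 = 0 ∨ n % 3 = 2 := by omega
    rcases hmod with h0 | h2
    · -- n ≡ 0, n ≥ 6
      have hn6 : 6 ≤ n := by omega
      have harith : TDCaux.g (n-1) + 2 = 2 * n / 3 + 1 := by
        unfold TDCaux.g; split_ifs <;> omega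
      rw [← harith]
      apply key
      · exact ⟨_, (TDCaux.fg_tdc (by omega)).1, (TDCaux.fg_tdc (by omega)).2⟩
      · intro k hk
        obtain ⟨f, hf, hb⟩ := hk
        have := TDCaux.lower_general hn f hf hb
        unfold TDCaux.g; split_ifs <;> omega
    · by_cases h2' : n = 2
      · subst h2'
        have : 2 * 2 / 3 + 1 = 2 := by norm_num
        rw [this]
        apply key
        · exact ⟨_, TDCaux.f2_tdc.1, TDCaux.f2_tdc.2⟩
        · intro k hk
          obtain ⟨f, hf, hb⟩ := hk
          have := TDCaux.lower_general (by norm_num) f hf hb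
          omega
      · -- n ≡ 2 mod 3, n ≥ 8
        have hn8 : 8 ≤ n := by omega
        have harith : TDCaux.h' (n-1) + 2 = 2 * n / 3 + 1 := by
          unfold TDCaux.h'; split_ifs <;> omega
        rw [← harith]
        apply key
        · exact ⟨_, (TDCaux.fh_tdc hn8).1, (TDCaux.fh_tdc hn8).2⟩
        · intro k hk
          obtain ⟨f, hf, hb⟩ := hk
          have := TDCaux.lower_general hn f hf hb
          unfold TDCaux.h'; split_ifs <;> omega
end
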